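/- arXiv:2111.06973 — 6 statements merged into one kernel-verified Lean document; each statement's English description precedes it below -/
import Mathlib

section
/- For every integer m ≥ 0, one has Σ_{a∈A_{+,m}} a^{q^m−1} ≠ 0 in A. (Genus-zero instance of the paper's Lemma that the function 𝒮_{j_m} does not vanish at the Frobenius twist Ξ^{(m)}.) -/
/-!
Let `E` be the extension of `Fq` of degree `m` and `α` a generator of it, so that
`1, α, …, α^(m-1)` is an `Fq`-basis of `E`. Evaluation at `α` sends the monic polynomial
`θ^m + Σ c i θ^i` to `α^m + Σ c i α^i`, hence maps `A_{+,m}` bijectively onto `E`.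
The image of the sum is therefore `Σ_{x ∈ E} x^(#E - 1) = #E - 1 = -1`.
-/

open Polynomial

/-- The monic polynomial `θ^d + Σ_i c i • θ^i` of degree `d`; as `c` ranges over
all tuples this enumerates the set `A_{+,d}` of monic polynomials of degree `d`. -/
noncomputable def monicOf (Fq : Type) [Field Fq] (d : ℕ) (c : Fin d → Fq) : Polynomial Fq :=
  Polynomial.X ^ d + ∑ i : Fin d, Polynomial.C (c i) * Polynomial.X ^ (i : ℕ)

theorem FiniteField.sum_pow_card_sub_one (K : Type*) [Field K] [Fintype K] :
    ∑ x : K, x ^ (Fintype.card K - 1) = -1 := by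
  classical
  have hq : 1 < Fintype.card K := Fintype.one_lt_card
  rw [← Finset.add_sum_erase _ _ (Finset.mem_univ 0), zero_pow (by omega), zero_add,
    Finset.sum_congr rfl fun x hx => pow_card_sub_one_eq_one x (Finset.ne_of_mem_erase hx),
    Finset.sum_const, Finset.card_erase_of_mem (Finset.mem_univ _), Finset.card_univ,
    nsmul_one, Nat.cast_sub hq.le, cast_card_eq_zero, Nat.cast_one, zero_sub]

theorem Module.Basis.bijective_add_sum_smul {ι R M : Type*} [Fintype ι] [Semiring R]
    [AddCommGroup M] [Module R M] (b : Basis ι R M) (v : M) :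
    Function.Bijective fun c : ι → R => v + ∑ i, c i • b i := by
  convert (Equiv.addLeft v).bijective.comp b.equivFun.symm.bijective with c
  simp [Basis.equivFun_symm_apply]

theorem FiniteField.exists_powerBasis_dim_eq (Fq : Type) [Field Fq] [Finite Fq] {m : ℕ}
    (hm : m ≠ 0) : ∃ (E : Type) (_ : Field E) (_ : Fintype E) (_ : Algebra Fq E)
      (pb : PowerBasis Fq E), pb.dim = m := by
  obtain ⟨p, _⟩ := CharP.exists Fq
  have : Fact p.Prime := ⟨CharP.char_is_prime Fq p⟩
  have : NeZero m := ⟨hm⟩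
  let pb := Field.powerBasisOfFiniteOfSeparable Fq (Extension Fq p m)
  exact ⟨_, _, .ofFinite _, _, pb, pb.finrank.symm.trans (finrank_extension Fq p m)⟩

section MonicOf

variable {Fq : Type} {E : Type*} [Field Fq]

theorem aeval_monicOf [Semiring E] [Algebra Fq E] (x : E) (d : ℕ) (c : Fin d → Fq) :
    aeval x (monicOf Fq d c) = x ^ d + ∑ i, c i • x ^ (i : ℕ) := by
  simp [monicOf, Algebra.smul_def]

theorem PowerBasis.bijective_aeval_monicOf [Ring E] [Algebra Fq E] (pb : PowerBasis Fq E) :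
    Function.Bijective fun c => aeval pb.gen (monicOf Fq pb.dim c) := by
  simpa only [aeval_monicOf, pb.coe_basis] using pb.basis.bijective_add_sum_smul (pb.gen ^ pb.dim)

theorem PowerBasis.aeval_sum_monicOf_pow [Fintype Fq] [Field E] [Fintype E] [Algebra Fq E]
    (pb : PowerBasis Fq E) :
    aeval pb.gen (∑ c, monicOf Fq pb.dim c ^ (Fintype.card Fq ^ pb.dim - 1)) = -1 := by
  have hcard : Fintype.card E = Fintype.card Fq ^ pb.dim := by
    rw [Module.card_eq_pow_finrank (K := Fq), pb.finrank]
  simp only [map_sum, map_pow]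
  rw [Fintype.sum_bijective _ pb.bijective_aeval_monicOf _ (fun x : E => x ^ (Fintype.card E - 1))
    fun _ => by rw [hcard], FiniteField.sum_pow_card_sub_one]

end MonicOf

/-- for every `m ≥ 0`, `Σ_{a ∈ A_{+,m}} a^{q^m - 1} ≠ 0` in `A = Fq[θ]`. -/
theorem statement2 (Fq : Type) [Field Fq] [Fintype Fq] (m : ℕ) :
    ∑ c : Fin m → Fq, monicOf Fq m c ^ (Fintype.card Fq ^ m - 1) ≠ 0 := by
  rcases eq_or_ne m 0 with rfl | hm
  · simp [monicOf]
  obtain ⟨E, _, _, _, pb, rfl⟩ := FiniteField.exists_powerBasis_dim_eq Fq hm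
  intro h
  exact neg_ne_zero.mpr one_ne_zero (by rw [← pb.aeval_sum_monicOf_pow, h, map_zero])
end

section
/- For every integer i ≥ 0, the identity 𝒮_i^{(1)} = 𝒮_{≤i} · S_i(q−1) holds in K[t]; explicitly, Σ_{a∈A_{+,i}} a(t)·a^{−q} = (Σ_{d=0}^{i} Σ_{a∈A_{+,d}} a(t)·a^{−1}) · (Σ_{b∈A_{+,i}} b^{−(q−1)}). (Genus-zero instance of the paper's key identity, Theorem 2.5.) -/
/-!
Genus-zero setting: `Fq` the finite field with `q = Fintype.card Fq` elements,
`A = Fq[θ] = Polynomial Fq`, `K = Fq(θ) = RatFunc Fq`.  `t` is a second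
indeterminate: polynomials in `t` over `K` are `Polynomial (RatFunc Fq)`.
For `a ∈ A`, `a(t)` denotes `a` with `θ` replaced by `t`.  For `d ≥ 0`,
`𝒮_d = Σ_{a ∈ A_{+,d}} a(t)·a⁻¹ ∈ K[t]`, `𝒮_{≤i} = Σ_{d=0}^{i} 𝒮_d`, the twist
`𝒮_i^{(1)} = Σ_{a ∈ A_{+,i}} a(t)·a^{-q}`, and `S_i(n) = Σ_{a ∈ A_{+,i}} a^{-n} ∈ K`.
-/

open Polynomial

/-- The power sum `S_d(n) = Σ_{a ∈ A_{+,d}} a^{-n} ∈ K`. -/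
noncomputable def powerSum (Fq : Type) [Field Fq] [Fintype Fq] (d n : ℕ) : RatFunc Fq :=
  ∑ c : Fin d → Fq, (algebraMap (Polynomial Fq) (RatFunc Fq) (monicOf Fq d c))⁻¹ ^ n

/-- `𝒮_d = Σ_{a ∈ A_{+,d}} a(t)·a⁻¹ ∈ K[t]`. -/
noncomputable def scriptS (Fq : Type) [Field Fq] [Fintype Fq] (d : ℕ) :
    Polynomial (RatFunc Fq) :=
  ∑ c : Fin d → Fq,
    Polynomial.C ((algebraMap (Polynomial Fq) (RatFunc Fq) (monicOf Fq d c))⁻¹) *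
      (monicOf Fq d c).map (algebraMap Fq (RatFunc Fq))

/-!
Both sides are polynomials in `t` of degree at most `i`, so it suffices to compare them at the
`i + 1` distinct points `t = θ^{q^k}`, `0 ≤ k ≤ i`, where `a(t)` becomes `a^{q^k}`.

At `k = 0` the left side is `S_i(q-1)`, while `𝒮_d(θ) = #A_{+,d} = q^d`, so `𝒮_{≤i}(θ) = 1`.
For `k ≥ 1` both sides vanish. Since `x ↦ x^{q^j}` is `F_q`-linear,
`(e + Σ c_l x_l)^{q^k-1} = ∏_{j<k} (e^{q^j} + Σ c_l x_l^{q^j})^{q-1}` is a polynomial of degree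
at most `k(q-1)` in the coefficients `c`, hence sums to zero over `c ∈ F_q^m` when `k < m`
(Chevalley–Warning). Taking `e = θ^d` gives `Σ_{a ∈ A_{+,d}} a^{q^k-1} = 0` for `k < d`, which
kills the left side, equal to `(Σ_{a ∈ A_{+,i}} a^{q^{k-1}-1})^q` at `θ^{q^k}`; taking `e = 0` gives `Σ_{deg a < m} a^{q^k-1} = 0`, and since every nonzero
polynomial of degree `< m` is, in `q - 1 ≡ -1` ways, a unit times a monic one, this says
`Σ_{d<m} Σ_{a ∈ A_{+,d}} a^{q^k-1} = 0`, which kills `𝒮_{≤i}(θ^{q^k})`.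
-/

open Finset

theorem MvPolynomial.totalDegree_C_add_sum_C_mul_X_le {R σ : Type*} [CommSemiring R]
    [Fintype σ] (a : R) (b : σ → R) :
    (C a + ∑ l, C (b l) * X l : MvPolynomial σ R).totalDegree ≤ 1 := by
  refine (totalDegree_add _ _).trans (max_le (by simp) ?_)
  refine totalDegree_finsetSum_le fun l _ => ?_
  rw [C_mul_X_eq_monomial]
  exact (totalDegree_monomial_le _ _).trans (by simp)

namespace FiniteField

variable {Fq : Type*} [Field Fq] [Fintype Fq] {R : Type*} [CommRing R] [Algebra Fq R]

local notation "q" => Fintype.card Fq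

theorem frobeniusAlgHom_pow_apply (k : ℕ) (x : R) :
    (frobeniusAlgHom Fq R ^ k) x = x ^ q ^ k := by
  rw [AlgHom.coe_pow, coe_frobeniusAlgHom, pow_iterate]

theorem eval_pow_card_pow_map (r : R) (p : Fq[X]) (k : ℕ) :
    (p.map (algebraMap Fq R)).eval (r ^ q ^ k) = aeval r p ^ q ^ k := by
  rw [eval_map_algebraMap, ← frobeniusAlgHom_pow_apply, aeval_algHom_apply,
    frobeniusAlgHom_pow_apply]

theorem sum_eval_algebraMap_eq_zero {σ : Type*} [Fintype σ] [DecidableEq σ]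
    (f : MvPolynomial σ R) (h : f.totalDegree < (q - 1) * Fintype.card σ) :
    ∑ x : σ → Fq, MvPolynomial.eval (fun i => algebraMap Fq R (x i)) f = 0 := by
  have hmonomial (d : σ →₀ ℕ) (hd : d ∈ f.support) :
      ∑ x : σ → Fq, MvPolynomial.eval x (MvPolynomial.monomial d 1) = 0 :=
    MvPolynomial.sum_eval_eq_zero _ <| (MvPolynomial.totalDegree_monomial_le d 1).trans_lt
      ((MvPolynomial.le_totalDegree hd).trans_lt h)
  have heval (x : σ → Fq) (d : σ →₀ ℕ) :
      MvPolynomial.eval x (MvPolynomial.monomial d 1) = ∏ i, x i ^ d i := by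
    rw [MvPolynomial.eval_monomial, one_mul, Finsupp.prod_fintype _ _ fun _ => pow_zero _]
  calc ∑ x : σ → Fq, MvPolynomial.eval (fun i => algebraMap Fq R (x i)) f
      = ∑ d ∈ f.support, f.coeff d *
          algebraMap Fq R (∑ x : σ → Fq, MvPolynomial.eval x (MvPolynomial.monomial d 1)) := by
        simp only [heval, MvPolynomial.eval_eq', map_sum, map_prod, map_pow, mul_sum]
        exact sum_comm
    _ = 0 := sum_eq_zero fun d hd => by rw [hmonomial d hd, map_zero, mul_zero]

theorem sum_add_sum_smul_pow_card_pow_sub_one_eq_zero {σ : Type*} [Fintype σ] [DecidableEq σ]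
    {k : ℕ} (hk : k < Fintype.card σ) (e : R) (x : σ → R) :
    ∑ c : σ → Fq, (e + ∑ l, c l • x l) ^ (q ^ k - 1) = 0 := by
  let L (j : ℕ) : MvPolynomial σ R :=
    MvPolynomial.C (e ^ q ^ j) + ∑ l, MvPolynomial.C (x l ^ q ^ j) * MvPolynomial.X l
  have hL (c : σ → Fq) (j : ℕ) :
      MvPolynomial.eval (fun l => algebraMap Fq R (c l)) (L j) = (e + ∑ l, c l • x l) ^ q ^ j := by
    rw [← frobeniusAlgHom_pow_apply (Fq := Fq) j (e + _), map_add, map_sum]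
    simp only [frobeniusAlgHom_pow_apply, map_add, map_sum, map_mul, MvPolynomial.eval_C,
      MvPolynomial.eval_X, Algebra.smul_def, ← map_pow, pow_card_pow, mul_comm]
  have hgeom : ∑ j ∈ range k, q ^ j * (q - 1) = q ^ k - 1 := by
    have := geom_sum_mul_add (q - 1) k
    rw [Nat.sub_one_add_one Fintype.card_ne_zero] at this
    rw [← sum_mul]
    omega
  have hdeg : (∏ j ∈ range k, L j ^ (q - 1)).totalDegree < (q - 1) * Fintype.card σ := by
    have hq : 0 < q - 1 := Nat.sub_pos_of_lt Fintype.one_lt_card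
    calc (∏ j ∈ range k, L j ^ (q - 1)).totalDegree
        ≤ ∑ j ∈ range k, (q - 1) * (L j).totalDegree :=
          (MvPolynomial.totalDegree_finsetProd _ _).trans
            (sum_le_sum fun j _ => MvPolynomial.totalDegree_pow _ _)
      _ ≤ ∑ j ∈ range k, (q - 1) * 1 :=
          sum_le_sum fun j _ => Nat.mul_le_mul_left _
            (MvPolynomial.totalDegree_C_add_sum_C_mul_X_le _ _)
      _ < (q - 1) * Fintype.card σ := by
          rw [sum_const, card_range, smul_eq_mul, mul_one, mul_comm]
          exact Nat.mul_lt_mul_of_pos_left hk hq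
  calc ∑ c : σ → Fq, (e + ∑ l, c l • x l) ^ (q ^ k - 1)
      = ∑ c : σ → Fq, MvPolynomial.eval (fun l => algebraMap Fq R (c l))
          (∏ j ∈ range k, L j ^ (q - 1)) := by
        simp only [map_prod, map_pow, hL, ← pow_mul, prod_pow_eq_pow_sum, hgeom]
    _ = 0 := sum_eval_algebraMap_eq_zero _ hdeg

end FiniteField

section Monic

variable {Fq : Type} [Field Fq]

theorem natDegree_monicOf (d : ℕ) (c : Fin d → Fq) : (monicOf Fq d c).natDegree = d := by
  rw [monicOf, natDegree_add_eq_left_of_degree_lt, natDegree_X_pow]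
  simpa using degree_sum_fin_lt c

theorem monicOf_monic (d : ℕ) (c : Fin d → Fq) : (monicOf Fq d c).Monic :=
  monic_X_pow_add (degree_sum_fin_lt c)

theorem algebraMap_monicOf_ne_zero (d : ℕ) (c : Fin d → Fq) :
    algebraMap Fq[X] (RatFunc Fq) (monicOf Fq d c) ≠ 0 :=
  (map_ne_zero_iff _ (IsFractionRing.injective _ _)).mpr (monicOf_monic d c).ne_zero

theorem map_monicOf_mem_degreeLT (d : ℕ) (c : Fin d → Fq) :
    (monicOf Fq d c).map (algebraMap Fq (RatFunc Fq)) ∈ degreeLT (RatFunc Fq) (d + 1) := by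
  rw [mem_degreeLT]
  refine degree_map_le.trans_lt ?_
  rw [degree_eq_natDegree (monicOf_monic d c).ne_zero, natDegree_monicOf]
  exact_mod_cast d.lt_succ_self

variable [Fintype Fq] {M : Type*}

theorem sum_fin_succ_sum_C_mul_X_pow [AddCommMonoid M] (m : ℕ) (g : Fq[X] → M) :
    ∑ c : Fin (m + 1) → Fq, g (∑ j, C (c j) * X ^ (j : ℕ)) =
      ∑ a : Fq, ∑ c : Fin m → Fq, g (C a * X ^ m + ∑ j : Fin m, C (c j) * X ^ (j : ℕ)) := by
  rw [← Fintype.sum_prod_type', ← (Fin.snocEquiv fun _ => Fq).sum_comp]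
  refine Fintype.sum_congr _ _ fun p => ?_
  simp [Fin.snocEquiv, Fin.sum_univ_castSucc, add_comm]

theorem sum_C_mul_X_pow_add_eq_sum_monicOf [AddCommMonoid M] {f : Fq[X] → M}
    (hf : ∀ a : Fq, a ≠ 0 → ∀ p, f (C a * p) = f p) {a : Fq} (ha : a ≠ 0) (m : ℕ) :
    ∑ c : Fin m → Fq, f (C a * X ^ m + ∑ j : Fin m, C (c j) * X ^ (j : ℕ)) =
      ∑ c : Fin m → Fq, f (monicOf Fq m c) := by
  refine (Fintype.sum_equiv (Equiv.piCongrRight fun _ => Equiv.mulLeft₀ a ha) _ _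
    fun c => ?_).symm
  rw [← hf a ha (monicOf Fq m c), monicOf, mul_add, mul_sum]
  simp [mul_assoc]

theorem sum_degree_lt_eq_neg_sum_monicOf [AddCommGroup M] [Module Fq M] {f : Fq[X] → M}
    (hf₀ : f 0 = 0) (hf : ∀ a : Fq, a ≠ 0 → ∀ p, f (C a * p) = f p) (m : ℕ) :
    ∑ c : Fin m → Fq, f (∑ j, C (c j) * X ^ (j : ℕ)) =
      -∑ d ∈ range m, ∑ c : Fin d → Fq, f (monicOf Fq d c) := by
  classical
  induction m with
  | zero => simp [hf₀]
  | succ m ih =>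
    set S := ∑ c : Fin m → Fq, f (monicOf Fq m c)
    have hunits : ∑ a ∈ ({0} : Finset Fq)ᶜ, S = -S := by
      rw [sum_const, card_compl, card_singleton, eq_neg_iff_add_eq_zero, ← succ_nsmul,
        Nat.sub_one_add_one Fintype.card_ne_zero, ← Nat.cast_smul_eq_nsmul Fq,
        FiniteField.cast_card_eq_zero, zero_smul]
    rw [sum_fin_succ_sum_C_mul_X_pow, Fintype.sum_eq_add_sum_compl 0,
      sum_congr rfl fun a ha => sum_C_mul_X_pow_add_eq_sum_monicOf hf (by simpa using ha) m,
      hunits, sum_range_succ]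
    simp only [map_zero, zero_mul, zero_add, ih, neg_add_rev]
    abel

local notation "q" => Fintype.card Fq

theorem pow_card_pow_sub_one_eq_one {a : Fq} (ha : a ≠ 0) (k : ℕ) : a ^ (q ^ k - 1) = 1 := by
  have h := pow_sub_one_mul (pow_pos (Fintype.card_pos (α := Fq)) k).ne' a
  rwa [FiniteField.pow_card_pow, mul_eq_right₀ ha] at h

theorem sum_monicOf_pow_eq_zero {d k : ℕ} (hk : k < d) :
    ∑ c : Fin d → Fq, monicOf Fq d c ^ (q ^ k - 1) = 0 := by
  simpa [monicOf, smul_eq_C_mul] using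
    FiniteField.sum_add_sum_smul_pow_card_pow_sub_one_eq_zero (Fq := Fq)
      (by simpa using hk) (X ^ d) fun j : Fin d => (X : Fq[X]) ^ (j : ℕ)

theorem sum_range_sum_monicOf_pow_eq_zero {k m : ℕ} (hk : k ≠ 0) (hkm : k < m) :
    ∑ d ∈ range m, ∑ c : Fin d → Fq, monicOf Fq d c ^ (q ^ k - 1) = 0 := by
  have hexp : q ^ k - 1 ≠ 0 :=
    Nat.sub_ne_zero_of_lt (Nat.one_lt_pow hk Fintype.one_lt_card)
  have hdecomp := sum_degree_lt_eq_neg_sum_monicOf (f := fun p : Fq[X] => p ^ (q ^ k - 1))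
    (zero_pow hexp) (fun a ha p => by
      rw [mul_pow, ← C_pow, pow_card_pow_sub_one_eq_one ha, C_1, one_mul]) m
  rw [← neg_eq_zero, ← hdecomp]
  simpa [smul_eq_C_mul] using
    FiniteField.sum_add_sum_smul_pow_card_pow_sub_one_eq_zero (Fq := Fq)
      (by simpa using hkm) 0 fun j : Fin m => (X : Fq[X]) ^ (j : ℕ)

end Monic

/-- The twist `𝒮_i^{(1)}`. -/
noncomputable def twistedScriptS (Fq : Type) [Field Fq] [Fintype Fq] (i : ℕ) :
    Polynomial (RatFunc Fq) :=
  ∑ c : Fin i → Fq,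
    C ((algebraMap Fq[X] (RatFunc Fq) (monicOf Fq i c))⁻¹ ^ Fintype.card Fq) *
      (monicOf Fq i c).map (algebraMap Fq (RatFunc Fq))

section Evaluation

variable {Fq : Type} [Field Fq] [Fintype Fq]

local notation "q" => Fintype.card Fq

theorem injective_X_pow_card_pow :
    Function.Injective fun k : ℕ => (RatFunc.X : RatFunc Fq) ^ q ^ k := by
  intro a b h
  have hX : (X : Fq[X]) ^ q ^ a = X ^ q ^ b :=
    IsFractionRing.injective Fq[X] (RatFunc Fq) (by simpa [← RatFunc.algebraMap_X] using h)
  exact Nat.pow_right_injective (Fintype.one_lt_card (α := Fq))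
    (by simpa using congrArg natDegree hX)

theorem eval_X_pow_map (p : Fq[X]) (k : ℕ) :
    (p.map (algebraMap Fq (RatFunc Fq))).eval (RatFunc.X ^ q ^ k) =
      algebraMap Fq[X] (RatFunc Fq) p ^ q ^ k := by
  rw [FiniteField.eval_pow_card_pow_map, ← RatFunc.algebraMap_X, aeval_algebraMap_apply,
    aeval_X_left_apply]

theorem scriptS_mem_degreeLT (d : ℕ) : scriptS Fq d ∈ degreeLT (RatFunc Fq) (d + 1) :=
  Submodule.sum_mem _ fun c _ => by
    rw [← smul_eq_C_mul]
    exact Submodule.smul_mem _ _ (map_monicOf_mem_degreeLT d c)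

theorem twistedScriptS_mem_degreeLT (i : ℕ) :
    twistedScriptS Fq i ∈ degreeLT (RatFunc Fq) (i + 1) :=
  Submodule.sum_mem _ fun c _ => by
    rw [← smul_eq_C_mul]
    exact Submodule.smul_mem _ _ (map_monicOf_mem_degreeLT i c)

theorem eval_X_pow_scriptS (d k : ℕ) :
    (scriptS Fq d).eval (RatFunc.X ^ q ^ k) =
      ∑ c : Fin d → Fq, (algebraMap Fq[X] (RatFunc Fq) (monicOf Fq d c))⁻¹ *
        algebraMap Fq[X] (RatFunc Fq) (monicOf Fq d c) ^ q ^ k := by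
  simp only [scriptS, eval_finsetSum, eval_mul, eval_C, eval_X_pow_map]

theorem eval_X_pow_twistedScriptS (i k : ℕ) :
    (twistedScriptS Fq i).eval (RatFunc.X ^ q ^ k) =
      ∑ c : Fin i → Fq, (algebraMap Fq[X] (RatFunc Fq) (monicOf Fq i c))⁻¹ ^ q *
        algebraMap Fq[X] (RatFunc Fq) (monicOf Fq i c) ^ q ^ k := by
  simp only [twistedScriptS, eval_finsetSum, eval_mul, eval_C, eval_X_pow_map]

theorem sum_range_eval_X_scriptS (n : ℕ) :
    ∑ d ∈ range (n + 1), (scriptS Fq d).eval RatFunc.X = 1 := by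
  have h (d : ℕ) : (scriptS Fq d).eval RatFunc.X = 0 ^ d := by
    have h := eval_X_pow_scriptS (Fq := Fq) d 0
    simp only [pow_zero, pow_one] at h
    rw [h, sum_congr rfl fun c _ => inv_mul_cancel₀ (algebraMap_monicOf_ne_zero d c), sum_const,
      card_univ, Fintype.card_fun, Fintype.card_fin, nsmul_one, Nat.cast_pow,
      ← map_natCast (algebraMap Fq (RatFunc Fq)), FiniteField.cast_card_eq_zero, map_zero]
  simp [h, sum_range_succ']

theorem sum_range_eval_X_pow_scriptS_eq_zero {k m : ℕ} (hk : k ≠ 0) (hkm : k < m) :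
    ∑ d ∈ range m, (scriptS Fq d).eval (RatFunc.X ^ q ^ k) = 0 := by
  have h (d : ℕ) (c : Fin d → Fq) :
      (algebraMap Fq[X] (RatFunc Fq) (monicOf Fq d c))⁻¹ *
        algebraMap Fq[X] (RatFunc Fq) (monicOf Fq d c) ^ q ^ k =
      algebraMap Fq[X] (RatFunc Fq) (monicOf Fq d c ^ (q ^ k - 1)) := by
    rw [map_pow, pow_sub₀ _ (algebraMap_monicOf_ne_zero d c)
      (Nat.one_le_pow _ _ (Fintype.card_pos (α := Fq))), pow_one, mul_comm]
  simp only [eval_X_pow_scriptS, h, ← map_sum, sum_range_sum_monicOf_pow_eq_zero hk hkm,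
    map_zero]

theorem eval_X_twistedScriptS (i : ℕ) :
    (twistedScriptS Fq i).eval RatFunc.X = powerSum Fq i (q - 1) := by
  have h := eval_X_pow_twistedScriptS (Fq := Fq) i 0
  simp only [pow_zero, pow_one] at h
  rw [h, powerSum]
  refine sum_congr rfl fun c _ => ?_
  rw [← pow_sub_one_mul Fintype.card_ne_zero, mul_assoc,
    inv_mul_cancel₀ (algebraMap_monicOf_ne_zero i c), mul_one]

theorem eval_X_pow_twistedScriptS_eq_zero {i k : ℕ} (hk : k ≠ 0) (hki : k ≤ i) :
    (twistedScriptS Fq i).eval (RatFunc.X ^ q ^ k) = 0 := by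
  have h (c : Fin i → Fq) :
      (algebraMap Fq[X] (RatFunc Fq) (monicOf Fq i c))⁻¹ ^ q *
        algebraMap Fq[X] (RatFunc Fq) (monicOf Fq i c) ^ q ^ k =
      FiniteField.frobeniusAlgHom Fq (RatFunc Fq)
        (algebraMap Fq[X] (RatFunc Fq) (monicOf Fq i c ^ (q ^ (k - 1) - 1))) := by
    have hqk : q ^ k = q ^ (k - 1) * q := by rw [← pow_succ, Nat.sub_one_add_one hk]
    rw [FiniteField.frobeniusAlgHom_apply, map_pow, pow_sub₀ _ (algebraMap_monicOf_ne_zero i c)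
      (Nat.one_le_pow _ _ (Fintype.card_pos (α := Fq))), pow_one, hqk, pow_mul, ← mul_pow,
      mul_comm]
  simp only [eval_X_pow_twistedScriptS, h, ← map_sum,
    sum_monicOf_pow_eq_zero (by omega : k - 1 < i), map_zero]

end Evaluation

/-- the key identity `𝒮_i^{(1)} = 𝒮_{≤i} · S_i(q-1)`; explicitly,
`Σ_{a ∈ A_{+,i}} a(t)·a^{-q} = (Σ_{d=0}^{i} Σ_{a ∈ A_{+,d}} a(t)·a⁻¹) · (Σ_{b ∈ A_{+,i}} b^{-(q-1)})`
in `K[t]`. -/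
theorem statement4 (Fq : Type) [Field Fq] [Fintype Fq] (i : ℕ) :
    (∑ c : Fin i → Fq,
        Polynomial.C ((algebraMap (Polynomial Fq) (RatFunc Fq) (monicOf Fq i c))⁻¹ ^
            Fintype.card Fq) *
          (monicOf Fq i c).map (algebraMap Fq (RatFunc Fq))) =
      (∑ d ∈ Finset.range (i + 1), scriptS Fq d) *
        Polynomial.C (powerSum Fq i (Fintype.card Fq - 1)) := by
  change twistedScriptS Fq i = _
  refine eq_of_degrees_lt_of_eval_index_eq (range (i + 1)) injective_X_pow_card_pow.injOn
    ?_ ?_ fun k hk => ?_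
  · rw [card_range, ← mem_degreeLT]
    exact twistedScriptS_mem_degreeLT i
  · rw [card_range, ← mem_degreeLT, mul_comm, ← smul_eq_C_mul]
    refine Submodule.smul_mem _ _ (Submodule.sum_mem _ fun d hd => ?_)
    exact degreeLT_mono (mem_range.mp hd) (scriptS_mem_degreeLT d)
  · rcases eq_or_ne k 0 with rfl | hk₀
    · simp only [pow_zero, pow_one, eval_mul, eval_finsetSum, eval_C, eval_X_twistedScriptS,
        sum_range_eval_X_scriptS, one_mul]
    · rw [eval_X_pow_twistedScriptS_eq_zero hk₀ (Nat.lt_succ_iff.mp (mem_range.mp hk)), eval_mul,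
        eval_finsetSum, sum_range_eval_X_pow_scriptS_eq_zero hk₀ (mem_range.mp hk), zero_mul]
end

section
/- For every integer i ≥ 0 and every integer n with 1 ≤ n ≤ q−1, one has S_i(n) = S_i(1)^n, i.e., Σ_{a∈A_{+,i}} a^{−n} = (Σ_{a∈A_{+,i}} a^{−1})^n in K. -/
/-!
Genus-zero setting: `Fq` the finite field with `q = Fintype.card Fq` elements,
`A = Fq[θ] = Polynomial Fq`, `K = Fq(θ) = RatFunc Fq`.  For `d ≥ 0` and `n ≥ 1`,
`S_d(n) = Σ_{a ∈ A_{+,d}} a^{-n} ∈ K`, where `A_{+,d}` (monic polynomials of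
degree `d`) is enumerated by the tuples of lower-order coefficients.
-/

open Polynomial

set_option maxRecDepth 8000
set_option linter.unusedSectionVars false

open Finset

section Aux
variable {Fq : Type} [Field Fq] [Fintype Fq]
variable {L : Type} [Field L] [Algebra Fq L]
local notation "ι" => algebraMap Fq L
local notation "q" => Fintype.card Fq



lemma aux_card_zero : ((q : ℕ) : L) = 0 := by
  rw [← map_natCast (algebraMap Fq L), FiniteField.cast_card_eq_zero, map_zero]

lemma aux_pow_card (x : Fq) : (ι x) ^ q = ι x := by
  rw [← map_pow, FiniteField.pow_card]

lemma aux_sum_lt (k : ℕ) (h : k < q - 1) : ∑ x : Fq, (ι x) ^ k = 0 := by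
  have : ∑ x : Fq, x ^ k = 0 := FiniteField.sum_pow_lt_card_sub_one Fq k h
  calc ∑ x : Fq, (ι x) ^ k = ι (∑ x : Fq, x ^ k) := by rw [map_sum]; simp [map_pow]
    _ = 0 := by rw [this, map_zero]

lemma aux_sum_top : ∑ x : Fq, (ι x) ^ (q - 1) = -1 := by
  classical
  have key : ∑ x : Fq, x ^ (q - 1) = -1 := by
    rw [← Finset.add_sum_erase _ _ (Finset.mem_univ (0 : Fq))]
    rw [zero_pow (by have := Fintype.one_lt_card (α := Fq); omega), zero_add]
    have : ∀ x ∈ Finset.univ.erase (0 : Fq), x ^ (q - 1) = 1 := fun x hx =>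
      FiniteField.pow_card_sub_one_eq_one x (Finset.mem_erase.mp hx).1
    rw [Finset.sum_congr rfl this, Finset.sum_const, Finset.card_erase_of_mem (Finset.mem_univ _),
      Finset.card_univ, nsmul_eq_mul, mul_one, Nat.cast_sub Fintype.card_pos,
      FiniteField.cast_card_eq_zero, Nat.cast_one, zero_sub]
  calc ∑ x : Fq, (ι x) ^ (q - 1) = ι (∑ x : Fq, x ^ (q - 1)) := by rw [map_sum]; simp [map_pow]
    _ = -1 := by rw [key, map_neg, map_one]

lemma aux_sum_units_inv [DecidableEq Fq] (m : ℕ) (h0 : 0 < m) (h1 : m < q - 1) :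
    ∑ d : Fqˣ, ((ι (d : Fq))⁻¹) ^ m = 0 := by
  classical
  have key : ∑ d : Fqˣ, ((d : Fq)⁻¹) ^ m = 0 := by
    rw [← Equiv.sum_comp (Equiv.inv Fqˣ) (fun d => ((d : Fq)⁻¹) ^ m)]
    simp only [Equiv.inv_apply]
    have : ∀ d : Fqˣ, (((d⁻¹ : Fqˣ) : Fq)⁻¹) ^ m = ((d : Fq)) ^ m := by
      intro d; rw [← Units.val_inv_eq_inv_val, inv_inv]
    rw [Finset.sum_congr rfl (fun d _ => this d), FiniteField.sum_pow_units, if_neg]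
    intro hdvd
    exact absurd (Nat.le_of_dvd h0 hdvd) (by omega)
  calc ∑ d : Fqˣ, ((ι (d : Fq))⁻¹) ^ m = ι (∑ d : Fqˣ, ((d : Fq)⁻¹) ^ m) := by
        rw [map_sum]; simp [map_pow, map_inv₀]
    _ = 0 := by rw [key, map_zero]



lemma aux_poly_prod : ∏ a : Fq, (X - C a) = X ^ q - X := by
  classical
  have hmonic : (X ^ q - X : Fq[X]).Monic :=
    Polynomial.monic_X_pow_sub (by rw [degree_X]; exact_mod_cast Fintype.one_lt_card)
  have hroots := FiniteField.roots_X_pow_card_sub_X Fq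
  have hdeg : (X ^ q - X : Fq[X]).natDegree = q :=
    FiniteField.X_pow_card_sub_X_natDegree_eq Fq Fintype.one_lt_card
  have hcard : Multiset.card (X ^ q - X : Fq[X]).roots = (X ^ q - X : Fq[X]).natDegree := by
    rw [hroots, hdeg]; simp [Finset.card_univ]
  have := prod_multiset_X_sub_C_of_monic_of_roots_card_eq hmonic hcard
  rw [hroots] at this
  rw [← this]
  rfl

lemma aux_prod (y : L) : ∏ x : Fq, (y + ι x) = y ^ q - y := by
  have h := aux_poly_prod (Fq := Fq)
  have := congrArg (Polynomial.aeval y (R := Fq) (A := L)) h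
  simp only [map_prod, map_sub, map_pow, aeval_X, aeval_C] at this
  calc ∏ x : Fq, (y + ι x) = ∏ x : Fq, (y - ι (-x)) := by
        apply Finset.prod_congr rfl; intro x _; rw [map_neg, sub_neg_eq_add]
    _ = ∏ x : Fq, (y - ι x) := Fintype.prod_equiv (Equiv.neg Fq) _ _ (fun x => by simp)
    _ = y ^ q - y := this



lemma aux_sum_lt' (k : ℕ) (h : k < q - 1) : ∑ x : Fq, (ι x) ^ k = 0 := by
  have : ∑ x : Fq, x ^ k = 0 := FiniteField.sum_pow_lt_card_sub_one Fq k h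
  calc ∑ x : Fq, (ι x) ^ k = ι (∑ x : Fq, x ^ k) := by rw [map_sum]; simp [map_pow]
    _ = 0 := by rw [this, map_zero]

lemma aux_add_pow_card (a b : L) : (a + b) ^ q = a ^ q + b ^ q := by
  obtain ⟨p, hchar⟩ := CharP.exists Fq
  haveI hp : Fact p.Prime := ⟨CharP.char_is_prime Fq p⟩
  obtain ⟨e, hpp, hq⟩ := FiniteField.card Fq p
  haveI := charP_of_injective_algebraMap (algebraMap Fq L).injective p
  rw [hq, add_pow_char_pow]

lemma aux_sum_pow_card {n : ℕ} (f : Fin n → L) : (∑ j, f j) ^ q = ∑ j, (f j) ^ q := by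
  obtain ⟨p, hchar⟩ := CharP.exists Fq
  haveI hp : Fact p.Prime := ⟨CharP.char_is_prime Fq p⟩
  obtain ⟨e, hpp, hq⟩ := FiniteField.card Fq p
  haveI := charP_of_injective_algebraMap (algebraMap Fq L).injective p
  rw [hq, sum_pow_char_pow]

lemma aux_pow_card' (x : Fq) : (ι x) ^ q = ι x := by
  rw [← map_pow, FiniteField.pow_card]

lemma aux_sum_top' : ∑ x : Fq, (ι x) ^ (q - 1) = -1 := by
  classical
  have key : ∑ x : Fq, x ^ (q - 1) = -1 := by
    rw [← Finset.add_sum_erase _ _ (Finset.mem_univ (0 : Fq))]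
    rw [zero_pow (by have := Fintype.one_lt_card (α := Fq); omega), zero_add]
    have : ∀ x ∈ Finset.univ.erase (0 : Fq), x ^ (q - 1) = 1 := fun x hx =>
      FiniteField.pow_card_sub_one_eq_one x (Finset.mem_erase.mp hx).1
    rw [Finset.sum_congr rfl this, Finset.sum_const, Finset.card_erase_of_mem (Finset.mem_univ _),
      Finset.card_univ, nsmul_eq_mul, mul_one, Nat.cast_sub Fintype.card_pos,
      FiniteField.cast_card_eq_zero, Nat.cast_one, zero_sub]
  calc ∑ x : Fq, (ι x) ^ (q - 1) = ι (∑ x : Fq, x ^ (q - 1)) := by rw [map_sum]; simp [map_pow]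
    _ = -1 := by rw [key, map_neg, map_one]

lemma aux_card_zero' : ((q : ℕ) : L) = 0 := by
  rw [← map_natCast (algebraMap Fq L), FiniteField.cast_card_eq_zero, map_zero]

lemma aux_T1_mul (y : L) (hy : ∀ x : Fq, y + ι x ≠ 0) :
    (∑ x : Fq, (y + ι x)⁻¹) * (y ^ q - y) = -1 := by
  have hq2 : 2 ≤ q := Fintype.one_lt_card
  have term : ∀ x : Fq, (y + ι x)⁻¹ * (y ^ q - y) = (y + ι x) ^ (q - 1) - 1 := by
    intro x
    have hx := hy x
    have h2 : (y + ι x) ^ q - (y + ι x) = y ^ q - y := by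
      rw [aux_add_pow_card, aux_pow_card']; ring
    rw [← h2]
    have hq1 : (y + ι x) ^ q = (y + ι x) ^ (q - 1) * (y + ι x) := by
      rw [← pow_succ]; congr 1; omega
    rw [hq1]
    field_simp
  rw [Finset.sum_mul]
  simp only [term]
  rw [Finset.sum_sub_distrib, Finset.sum_const, Finset.card_univ, nsmul_eq_mul, mul_one,
    aux_card_zero' (Fq := Fq) (L := L)]
  have main : ∑ x : Fq, (y + ι x) ^ (q - 1) = -1 := by
    calc ∑ x : Fq, (y + ι x) ^ (q - 1)
        = ∑ x : Fq, ∑ k ∈ Finset.range (q - 1 + 1),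
            y ^ k * (ι x) ^ (q - 1 - k) * ((q - 1).choose k : L) :=
          Finset.sum_congr rfl (fun x _ => add_pow y (ι x) (q - 1))
      _ = ∑ k ∈ Finset.range (q - 1 + 1), ∑ x : Fq,
            y ^ k * (ι x) ^ (q - 1 - k) * ((q - 1).choose k : L) := Finset.sum_comm
      _ = ∑ k ∈ Finset.range (q - 1 + 1),
            (y ^ k * ((q - 1).choose k : L)) * ∑ x : Fq, (ι x) ^ (q - 1 - k) := by
          refine Finset.sum_congr rfl fun k _ => ?_
          rw [Finset.mul_sum]
          exact Finset.sum_congr rfl fun x _ => by ring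
      _ = -1 := by
          rw [Finset.sum_eq_single 0]
          · simp only [pow_zero, Nat.choose_zero_right, Nat.cast_one, mul_one, one_mul,
              Nat.sub_zero]
            rw [aux_sum_top']
          · intro k _ hk
            rw [aux_sum_lt' (q - 1 - k) (by omega), mul_zero]
          · intro h; exact absurd (Finset.mem_range.mpr (by omega)) h
  rw [main]; ring

lemma aux_e_ne (y : L) (hy : ∀ x : Fq, y + ι x ≠ 0) : y ^ q - y ≠ 0 := by
  intro h
  have := aux_T1_mul y hy
  rw [h, mul_zero] at this
  exact absurd this.symm (by norm_num)

lemma aux_T1 (y : L) (hy : ∀ x : Fq, y + ι x ≠ 0) :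
    ∑ x : Fq, (y + ι x)⁻¹ = -(y ^ q - y)⁻¹ := by
  have he := aux_e_ne y hy
  have h := aux_T1_mul y hy
  have : (∑ x : Fq, (y + ι x)⁻¹) = -1 * (y ^ q - y)⁻¹ := by
    rw [← h, mul_assoc, mul_inv_cancel₀ he, mul_one]
  rw [this, neg_one_mul]


lemma aux_pf (d Y : L) (hd : d ≠ 0) (hY : Y ≠ 0) (hYd : Y + d ≠ 0) (n : ℕ) :
    (Y + d)⁻¹ * (Y⁻¹) ^ n =
      -(∑ k ∈ Finset.range n, (-d⁻¹) ^ (n - k) * (Y⁻¹) ^ (k + 1)) + (-d⁻¹) ^ n * (Y + d)⁻¹ := by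
  induction n with
  | zero => simp
  | succ m ih =>
    have base : (Y + d)⁻¹ * Y⁻¹ = d⁻¹ * Y⁻¹ - d⁻¹ * (Y + d)⁻¹ := by
      field_simp
      ring
    have step1 : (Y + d)⁻¹ * (Y⁻¹) ^ (m + 1) = ((Y + d)⁻¹ * (Y⁻¹) ^ m) * Y⁻¹ := by ring
    rw [step1, ih, Finset.sum_range_succ']
    simp only [Nat.add_sub_add_right, Nat.add_sub_cancel_left, Nat.sub_zero]
    rw [add_mul, neg_mul, Finset.sum_mul]
    have hsum : ∀ k ∈ Finset.range m,
        ((-d⁻¹) ^ (m - k) * (Y⁻¹) ^ (k + 1)) * Y⁻¹ = (-d⁻¹) ^ (m - k) * (Y⁻¹) ^ (k + 1 + 1) :=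
      fun k _ => by ring
    rw [Finset.sum_congr rfl hsum, mul_assoc, base]
    ring

lemma aux_decomp [DecidableEq Fq] (g : Fq → L) (x : Fq) :
    ∑ x' : Fq, g x' = g x + ∑ d : Fqˣ, g (x + (d : Fq)) := by
  have h1 : ∑ x' : Fq, g x' = ∑ z : Fq, g (x + z) :=
    (Fintype.sum_equiv (Equiv.addLeft x) _ _ (fun z => rfl)).symm
  rw [h1, ← Finset.add_sum_erase _ _ (Finset.mem_univ (0 : Fq))]
  have hx0 : x + 0 = x := add_zero x
  rw [hx0]
  congr 1
  have h2 : ∑ d : Fqˣ, g (x + (d : Fq)) = ∑ a : {z : Fq // z ≠ 0}, g (x + (a : Fq)) :=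
    Fintype.sum_equiv (unitsEquivNeZero (G₀ := Fq)) _ _ (fun d => rfl)
  rw [h2, Finset.sum_subtype (p := fun z : Fq => z ≠ 0) _
    (fun z => by simp [Finset.mem_erase]) (fun z => g (x + z))]

lemma aux_cross [DecidableEq Fq] (y : L) (hy : ∀ x : Fq, y + ι x ≠ 0) (n : ℕ) (h0 : 0 < n) (h1 : n < q - 1) :
    ∑ x : Fq, ∑ d : Fqˣ, (y + ι x + ι (d : Fq))⁻¹ * ((y + ι x)⁻¹) ^ n = 0 := by
  classical
  have hιd : ∀ d : Fqˣ, ι (d : Fq) ≠ 0 := fun d => by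
    simp only [ne_eq, map_eq_zero_iff _ (algebraMap Fq L).injective]
    exact d.ne_zero
  have hsum : ∀ (x : Fq) (d : Fqˣ), y + ι x + ι (d : Fq) ≠ 0 := fun x d => by
    have := hy (x + (d : Fq)); rwa [map_add, ← add_assoc] at this
  have hrw : ∀ (x : Fq) (d : Fqˣ),
      (y + ι x + ι (d : Fq))⁻¹ * ((y + ι x)⁻¹) ^ n =
        -(∑ k ∈ Finset.range n, (-(ι (d : Fq))⁻¹) ^ (n - k) * ((y + ι x)⁻¹) ^ (k + 1))
          + (-(ι (d : Fq))⁻¹) ^ n * (y + ι x + ι (d : Fq))⁻¹ :=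
    fun x d => aux_pf (ι (d : Fq)) (y + ι x) (hιd d) (hy x) (hsum x d) n
  have partA : ∀ x : Fq,
      ∑ d : Fqˣ, (∑ k ∈ Finset.range n, (-(ι (d : Fq))⁻¹) ^ (n - k) * ((y + ι x)⁻¹) ^ (k + 1))
        = 0 := by
    intro x
    rw [Finset.sum_comm]
    refine Finset.sum_eq_zero fun k hk => ?_
    have hk' := Finset.mem_range.mp hk
    have hz : ∑ d : Fqˣ, ((ι (d : Fq))⁻¹) ^ (n - k) = 0 :=
      aux_sum_units_inv (n - k) (by omega) (by omega)
    calc ∑ d : Fqˣ, (-(ι (d : Fq))⁻¹) ^ (n - k) * ((y + ι x)⁻¹) ^ (k + 1)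
        = (∑ d : Fqˣ, (-(ι (d : Fq))⁻¹) ^ (n - k)) * ((y + ι x)⁻¹) ^ (k + 1) :=
          (Finset.sum_mul _ _ _).symm
      _ = 0 := by
          have hneg : ∀ a : L, (-a) ^ (n - k) = (-1) ^ (n - k) * a ^ (n - k) :=
            fun a => neg_pow a (n - k)
          have hs : ∑ d : Fqˣ, (-(ι (d : Fq))⁻¹) ^ (n - k)
              = (-1) ^ (n - k) * ∑ d : Fqˣ, ((ι (d : Fq))⁻¹) ^ (n - k) := by
            rw [Finset.mul_sum]
            exact Finset.sum_congr rfl fun d _ => hneg _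
          rw [hs, hz, mul_zero, zero_mul]
  have partB : ∑ x : Fq, ∑ d : Fqˣ, (-(ι (d : Fq))⁻¹) ^ n * (y + ι x + ι (d : Fq))⁻¹ = 0 := by
    rw [Finset.sum_comm]
    have hz : ∑ d : Fqˣ, ((ι (d : Fq))⁻¹) ^ n = 0 := aux_sum_units_inv n h0 h1
    calc ∑ d : Fqˣ, ∑ x : Fq, (-(ι (d : Fq))⁻¹) ^ n * (y + ι x + ι (d : Fq))⁻¹
        = ∑ d : Fqˣ, (-(ι (d : Fq))⁻¹) ^ n * ∑ x : Fq, (y + ι x + ι (d : Fq))⁻¹ := by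
          exact Finset.sum_congr rfl fun d _ => (Finset.mul_sum _ _ _).symm
      _ = ∑ d : Fqˣ, (-(ι (d : Fq))⁻¹) ^ n * ∑ x : Fq, (y + ι x)⁻¹ := by
          refine Finset.sum_congr rfl fun d _ => ?_
          congr 1
          refine Fintype.sum_equiv (Equiv.addRight (d : Fq)) _ _ fun x => ?_
          simp only [Equiv.coe_addRight, map_add]
          rw [← add_assoc]
      _ = (∑ d : Fqˣ, (-(ι (d : Fq))⁻¹) ^ n) * ∑ x : Fq, (y + ι x)⁻¹ :=
          (Finset.sum_mul _ _ _).symm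
      _ = 0 := by
          have hneg : ∀ a : L, (-a) ^ n = (-1) ^ n * a ^ n := fun a => neg_pow a n
          have hs : ∑ d : Fqˣ, (-(ι (d : Fq))⁻¹) ^ n
              = (-1) ^ n * ∑ d : Fqˣ, ((ι (d : Fq))⁻¹) ^ n := by
            rw [Finset.mul_sum]
            exact Finset.sum_congr rfl fun d _ => hneg _
          rw [hs, hz, mul_zero, zero_mul]
  calc ∑ x : Fq, ∑ d : Fqˣ, (y + ι x + ι (d : Fq))⁻¹ * ((y + ι x)⁻¹) ^ n
      = ∑ x : Fq, ∑ d : Fqˣ,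
          (-(∑ k ∈ Finset.range n, (-(ι (d : Fq))⁻¹) ^ (n - k) * ((y + ι x)⁻¹) ^ (k + 1))
            + (-(ι (d : Fq))⁻¹) ^ n * (y + ι x + ι (d : Fq))⁻¹) :=
        Finset.sum_congr rfl fun x _ => Finset.sum_congr rfl fun d _ => hrw x d
    _ = (∑ x : Fq, ∑ d : Fqˣ,
          -(∑ k ∈ Finset.range n, (-(ι (d : Fq))⁻¹) ^ (n - k) * ((y + ι x)⁻¹) ^ (k + 1)))
        + ∑ x : Fq, ∑ d : Fqˣ, (-(ι (d : Fq))⁻¹) ^ n * (y + ι x + ι (d : Fq))⁻¹ := by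
        rw [← Finset.sum_add_distrib]
        exact Finset.sum_congr rfl fun x _ => Finset.sum_add_distrib
    _ = 0 := by
        rw [partB, add_zero]
        refine Finset.sum_eq_zero fun x _ => ?_
        rw [Finset.sum_neg_distrib, partA x, neg_zero]

lemma aux_T_step (y : L) (hy : ∀ x : Fq, y + ι x ≠ 0) (n : ℕ) (h0 : 0 < n) (h1 : n < q - 1) :
    ∑ x : Fq, ((y + ι x)⁻¹) ^ (n + 1) =
      (∑ x : Fq, (y + ι x)⁻¹) * ∑ x : Fq, ((y + ι x)⁻¹) ^ n := by
  classical
  have key := aux_cross y hy n h0 h1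
  symm
  calc (∑ x' : Fq, (y + ι x')⁻¹) * ∑ x : Fq, ((y + ι x)⁻¹) ^ n
      = ∑ x : Fq, (∑ x' : Fq, (y + ι x')⁻¹) * ((y + ι x)⁻¹) ^ n := Finset.mul_sum _ _ _
    _ = ∑ x : Fq, (((y + ι x)⁻¹ + ∑ d : Fqˣ, (y + ι (x + (d : Fq)))⁻¹) * ((y + ι x)⁻¹) ^ n) := by
        refine Finset.sum_congr rfl fun x _ => ?_
        rw [aux_decomp (fun z => (y + ι z)⁻¹) x]
    _ = ∑ x : Fq, (((y + ι x)⁻¹) ^ (n + 1)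
          + ∑ d : Fqˣ, (y + ι x + ι (d : Fq))⁻¹ * ((y + ι x)⁻¹) ^ n) := by
        refine Finset.sum_congr rfl fun x _ => ?_
        rw [add_mul, Finset.sum_mul, ← pow_succ']
        congr 1
        refine Finset.sum_congr rfl fun d _ => ?_
        rw [map_add, ← add_assoc]
    _ = (∑ x : Fq, ((y + ι x)⁻¹) ^ (n + 1))
          + ∑ x : Fq, ∑ d : Fqˣ, (y + ι x + ι (d : Fq))⁻¹ * ((y + ι x)⁻¹) ^ n :=
        Finset.sum_add_distrib
    _ = ∑ x : Fq, ((y + ι x)⁻¹) ^ (n + 1) := by rw [key, add_zero]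

lemma aux_core (y : L) (hy : ∀ x : Fq, y + ι x ≠ 0) :
    ∀ n : ℕ, 1 ≤ n → n ≤ q - 1 →
      ∑ x : Fq, ((y + ι x)⁻¹) ^ n = (∑ x : Fq, (y + ι x)⁻¹) ^ n := by
  intro n
  induction n with
  | zero => omega
  | succ m ih =>
    intro _ hle
    by_cases hm : m = 0
    · subst hm; simp
    · have h0 : 0 < m := Nat.pos_of_ne_zero hm
      have h1 : m < q - 1 := by omega
      rw [aux_T_step y hy m h0 h1, ih (by omega) (by omega), ← pow_succ']

lemma aux_hy_of_hz (w z : L) (hw : w ≠ 0) (hz : ∀ x : Fq, z + ι x * w ≠ 0) :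
    ∀ x : Fq, z * w⁻¹ + ι x ≠ 0 := by
  intro x h
  apply hz x
  have hfac : (z * w⁻¹ + ι x) * w = z + ι x * w := by field_simp
  rw [← hfac, h, zero_mul]

lemma aux_rel (w z : L) (hw : w ≠ 0) :
    (z * w⁻¹) ^ q - z * w⁻¹ = (z ^ q - w ^ (q - 1) * z) * (w ^ q)⁻¹ := by
  have hq1 : w ^ q = w ^ (q - 1) * w := by
    rw [← pow_succ]; congr 1; have : 1 ≤ q := Fintype.card_pos; omega
  have hwq1 : (w : L) ^ (q - 1) ≠ 0 := pow_ne_zero _ hw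
  have h2 : w ^ (q - 1) * (w ^ q)⁻¹ = w⁻¹ := by
    rw [hq1, mul_inv, ← mul_assoc, mul_inv_cancel₀ hwq1, one_mul]
  calc (z * w⁻¹) ^ q - z * w⁻¹
      = z ^ q * (w ^ q)⁻¹ - z * (w ^ (q - 1) * (w ^ q)⁻¹) := by rw [mul_pow, inv_pow, h2]
    _ = (z ^ q - w ^ (q - 1) * z) * (w ^ q)⁻¹ := by ring

lemma aux_psi_ne (w z : L) (hw : w ≠ 0) (hz : ∀ x : Fq, z + ι x * w ≠ 0) :
    z ^ q - w ^ (q - 1) * z ≠ 0 := by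
  have hy := aux_hy_of_hz w z hw hz
  have he := aux_e_ne (z * w⁻¹) hy
  intro h
  apply he
  rw [aux_rel (Fq := Fq) w z hw, h, zero_mul]

lemma aux_fiber (w z : L) (hw : w ≠ 0) (hz : ∀ x : Fq, z + ι x * w ≠ 0)
    (n : ℕ) (h1 : 1 ≤ n) (h2 : n ≤ q - 1) :
    ∑ x : Fq, ((z + ι x * w)⁻¹) ^ n
      = ((-(w ^ (q - 1))) * (z ^ q - w ^ (q - 1) * z)⁻¹) ^ n := by
  have hy := aux_hy_of_hz w z hw hz
  have hterm : ∀ x : Fq, ((z + ι x * w)⁻¹) ^ n = (w⁻¹) ^ n * ((z * w⁻¹ + ι x)⁻¹) ^ n := by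
    intro x
    have hfac : z + ι x * w = (z * w⁻¹ + ι x) * w := by field_simp
    rw [hfac, mul_inv, mul_pow, mul_comm]
  rw [Finset.sum_congr rfl (fun x _ => hterm x), ← Finset.mul_sum,
    aux_core (z * w⁻¹) hy n h1 h2, aux_T1 (z * w⁻¹) hy, ← mul_pow]
  congr 1
  have hey := aux_e_ne (z * w⁻¹) hy
  have hez := aux_psi_ne w z hw hz
  have hrel := aux_rel (Fq := Fq) w z hw
  have hq1 : w ^ q = w ^ (q - 1) * w := by
    rw [← pow_succ]; congr 1; have : 1 ≤ q := Fintype.card_pos; omega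
  rw [hrel, hq1]
  field_simp
lemma aux_resum {m : ℕ} (f : (Fin (m + 1) → Fq) → L) :
    ∑ c : Fin (m + 1) → Fq, f c = ∑ c' : Fin m → Fq, ∑ x : Fq, f (Fin.cons x c') := by
  rw [← Equiv.sum_comp (Fin.consEquiv (fun _ : Fin (m + 1) => Fq)) f, Fintype.sum_prod_type_right]
  rfl

lemma aux_main (n : ℕ) (h1 : 1 ≤ n) (h2 : n ≤ q - 1) :
    ∀ (k : ℕ) (b : Fin k → L) (u : L),
      (∀ c : Fin k → Fq, u + ∑ j, ι (c j) * b j ≠ 0) →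
      ∑ c : Fin k → Fq, ((u + ∑ j, ι (c j) * b j)⁻¹) ^ n
        = (∑ c : Fin k → Fq, (u + ∑ j, ι (c j) * b j)⁻¹) ^ n := by
  intro k
  induction k with
  | zero =>
    intro b u hb
    have he : ∀ c : Fin 0 → Fq, ∑ j : Fin 0, ι (c j) * b j = 0 := fun c => by simp
    have h0 : ∀ f : (Fin 0 → Fq) → L, ∑ c : Fin 0 → Fq, f c = f (fun j => j.elim0) :=
      fun f => Fintype.sum_unique f
    rw [h0, h0, he]
  | succ m ih =>
    intro b u hb
    set w := b 0 with hwdef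
    set b' : Fin m → L := fun j => b j.succ with hb'def
    have hsplit : ∀ (x : Fq) (c' : Fin m → Fq),
        u + ∑ j, ι ((Fin.cons x c' : Fin (m + 1) → Fq) j) * b j = (u + ∑ j, ι (c' j) * b' j) + ι x * w := by
      intro x c'
      rw [Fin.sum_univ_succ]
      simp only [Fin.cons_zero, Fin.cons_succ, hb'def]
      ring
    by_cases hw : w = 0
    · -- degenerate case: inner sums are constant, char p kills them
      have hval : ∀ (x : Fq) (c' : Fin m → Fq),
          u + ∑ j, ι ((Fin.cons x c' : Fin (m + 1) → Fq) j) * b j = u + ∑ j, ι (c' j) * b' j := by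
        intro x c'; rw [hsplit, hw, mul_zero, add_zero]
      have hzero : ∀ r : ℕ, ∑ c : Fin (m + 1) → Fq, ((u + ∑ j, ι (c j) * b j)⁻¹) ^ r = 0 := by
        intro r
        rw [aux_resum]
        refine Finset.sum_eq_zero fun c' _ => ?_
        have : ∀ x : Fq, ((u + ∑ j, ι ((Fin.cons x c' : Fin (m + 1) → Fq) j) * b j)⁻¹) ^ r
            = ((u + ∑ j, ι (c' j) * b' j)⁻¹) ^ r := fun x => by rw [hval]
        rw [Finset.sum_congr rfl fun x _ => this x, Finset.sum_const, Finset.card_univ,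
          nsmul_eq_mul, aux_card_zero' (Fq := Fq) (L := L), zero_mul]
      have hz1 : ∑ c : Fin (m + 1) → Fq, (u + ∑ j, ι (c j) * b j)⁻¹ = 0 := by
        have h := hzero 1
        simpa using h
      rw [hzero n, hz1, zero_pow (by omega)]
    · -- main case
      have hz' : ∀ (c' : Fin m → Fq) (x : Fq),
          (u + ∑ j, ι (c' j) * b' j) + ι x * w ≠ 0 := fun c' x => by
        rw [← hsplit]; exact hb _
      set b'' : Fin m → L := fun j => (b' j) ^ q - w ^ (q - 1) * b' j with hb''def
      set u'' : L := u ^ q - w ^ (q - 1) * u with hu''def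
      have hpsi : ∀ c' : Fin m → Fq,
          (u + ∑ j, ι (c' j) * b' j) ^ q - w ^ (q - 1) * (u + ∑ j, ι (c' j) * b' j)
            = u'' + ∑ j, ι (c' j) * b'' j := by
        intro c'
        have hpow : (u + ∑ j, ι (c' j) * b' j) ^ q
            = u ^ q + ∑ j, ι (c' j) * (b' j) ^ q := by
          rw [aux_add_pow_card (Fq := Fq), aux_sum_pow_card (Fq := Fq)]
          congr 1
          refine Finset.sum_congr rfl fun j _ => ?_
          rw [mul_pow, aux_pow_card' (Fq := Fq)]
        calc (u + ∑ j, ι (c' j) * b' j) ^ q - w ^ (q - 1) * (u + ∑ j, ι (c' j) * b' j)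
            = u ^ q + (∑ j, ι (c' j) * (b' j) ^ q)
              - (w ^ (q - 1) * u + ∑ j, w ^ (q - 1) * (ι (c' j) * b' j)) := by
              rw [hpow, mul_add, Finset.mul_sum]
          _ = (u ^ q - w ^ (q - 1) * u)
              + ∑ j, (ι (c' j) * (b' j) ^ q - w ^ (q - 1) * (ι (c' j) * b' j)) := by
              rw [Finset.sum_sub_distrib]; ring
          _ = u'' + ∑ j, ι (c' j) * b'' j := by
              refine congrArg₂ (· + ·) rfl ?_
              refine Finset.sum_congr rfl fun j _ => ?_
              show ι (c' j) * (b' j) ^ q - w ^ (q - 1) * (ι (c' j) * b' j)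
                  = ι (c' j) * ((b' j) ^ q - w ^ (q - 1) * b' j)
              ring
      have hb'' : ∀ c' : Fin m → Fq, u'' + ∑ j, ι (c' j) * b'' j ≠ 0 := fun c' => by
        rw [← hpsi c']
        exact aux_psi_ne w _ hw (hz' c')
      have hfib : ∀ (r : ℕ) (hr1 : 1 ≤ r) (hr2 : r ≤ q - 1),
          ∑ c : Fin (m + 1) → Fq, ((u + ∑ j, ι (c j) * b j)⁻¹) ^ r
            = (-(w ^ (q - 1))) ^ r * ∑ c' : Fin m → Fq, ((u'' + ∑ j, ι (c' j) * b'' j)⁻¹) ^ r := by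
        intro r hr1 hr2
        rw [aux_resum, Finset.mul_sum]
        refine Finset.sum_congr rfl fun c' _ => ?_
        have h1' : ∀ x : Fq, ((u + ∑ j, ι ((Fin.cons x c' : Fin (m + 1) → Fq) j) * b j)⁻¹) ^ r
            = (((u + ∑ j, ι (c' j) * b' j) + ι x * w)⁻¹) ^ r := fun x => by rw [hsplit]
        rw [Finset.sum_congr rfl fun x _ => h1' x,
          aux_fiber w _ hw (hz' c') r hr1 hr2, mul_pow, hpsi c']
      have hq1 : (1 : ℕ) ≤ q - 1 := by
        have := Fintype.one_lt_card (α := Fq); omega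
      have hfib1 : ∑ c : Fin (m + 1) → Fq, (u + ∑ j, ι (c j) * b j)⁻¹
          = (-(w ^ (q - 1))) * ∑ c' : Fin m → Fq, (u'' + ∑ j, ι (c' j) * b'' j)⁻¹ := by
        have h := hfib 1 le_rfl hq1
        simpa using h
      rw [hfib n h1 h2, ih b'' u'' hb'', hfib1, mul_pow]
end Aux

lemma monicOf_ne_zero (Fq : Type) [Field Fq] (d : ℕ) (c : Fin d → Fq) :
    monicOf Fq d c ≠ 0 := by
  intro h
  have hc : (monicOf Fq d c).coeff d = 1 := by
    rw [monicOf, Polynomial.coeff_add, Polynomial.coeff_X_pow, if_pos rfl,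
      Polynomial.finset_sum_coeff]
    have hz : ∀ j : Fin d, (Polynomial.C (c j) * Polynomial.X ^ (j : ℕ)).coeff d = 0 := by
      intro j
      rw [Polynomial.coeff_C_mul, Polynomial.coeff_X_pow,
        if_neg (by have := j.isLt; omega), mul_zero]
    rw [Finset.sum_congr rfl fun j _ => hz j, Finset.sum_const_zero, add_zero]
  rw [h, Polynomial.coeff_zero] at hc
  exact zero_ne_one hc

/-- for every `i ≥ 0` and every `1 ≤ n ≤ q - 1`,
`S_i(n) = S_i(1)^n` in `K`. -/
theorem statement5 (Fq : Type) [Field Fq] [Fintype Fq] (i n : ℕ)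
    (h1 : 1 ≤ n) (h2 : n ≤ Fintype.card Fq - 1) :
    powerSum Fq i n = powerSum Fq i 1 ^ n := by
  classical
  set θ : RatFunc Fq := algebraMap (Polynomial Fq) (RatFunc Fq) X with hθ
  have hmap : ∀ c : Fin i → Fq,
      algebraMap (Polynomial Fq) (RatFunc Fq) (monicOf Fq i c)
        = θ ^ i + ∑ j, algebraMap Fq (RatFunc Fq) (c j) * θ ^ (j : ℕ) := by
    intro c
    rw [monicOf, map_add, map_pow, map_sum]
    congr 1
    refine Finset.sum_congr rfl fun j _ => ?_
    rw [map_mul, map_pow, IsScalarTower.algebraMap_apply Fq (Polynomial Fq) (RatFunc Fq),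
      Polynomial.algebraMap_eq]
  have hne : ∀ c : Fin i → Fq,
      θ ^ i + ∑ j, algebraMap Fq (RatFunc Fq) (c j) * θ ^ (j : ℕ) ≠ 0 := by
    intro c
    rw [← hmap c]
    exact RatFunc.algebraMap_ne_zero (monicOf_ne_zero Fq i c)
  have key := aux_main n h1 h2 i (fun j => θ ^ (j : ℕ)) (θ ^ i) hne
  unfold powerSum
  calc ∑ c : Fin i → Fq, (algebraMap (Polynomial Fq) (RatFunc Fq) (monicOf Fq i c))⁻¹ ^ n
      = ∑ c : Fin i → Fq,
          ((θ ^ i + ∑ j, algebraMap Fq (RatFunc Fq) (c j) * θ ^ (j : ℕ))⁻¹) ^ n :=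
        Finset.sum_congr rfl fun c _ => by rw [hmap c]
    _ = (∑ c : Fin i → Fq,
          (θ ^ i + ∑ j, algebraMap Fq (RatFunc Fq) (c j) * θ ^ (j : ℕ))⁻¹) ^ n := key
    _ = (∑ c : Fin i → Fq, (algebraMap (Polynomial Fq) (RatFunc Fq) (monicOf Fq i c))⁻¹ ^ 1) ^ n := by
        congr 1
        exact Finset.sum_congr rfl fun c _ => by rw [hmap c, pow_one]
end

section
/- For every integer n ≥ 0, the n-th Carlitz–Hayes polynomial satisfies E_n(z) = Σ_{m=0}^{n} (−1)^m S_{<n}(q−1, q(q−1), …, (q−1)q^{m−1}) · z^{q^m} in K[z], where the summand for m = 0 is z and, for 1 ≤ m ≤ n, the coefficient of z^{q^m} is (−1)^m S_{<n}(q−1, q(q−1), …, (q−1)q^{m−1}); in particular E_n is F_q-linear and all its other coefficients vanish. (Genus-zero instance of the Proposition on the coefficients κ_{n,m} of the Carlitz–Hayes polynomials.) -/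
/-!
Genus-zero setting: `Fq` the finite field with `q = Fintype.card Fq` elements,
`A = Fq[θ] = Polynomial Fq`, `K = Fq(θ) = RatFunc Fq`.  For `d ≥ 0` and `n ≥ 1`,
`S_d(n) = Σ_{a ∈ A_{+,d}} a^{-n} ∈ K`; for a tuple `(s₁,…,s_r)`,
`S_{<d}(s₁,…,s_r) = Σ_{i<d} S_i(s₁)·S_{<i}(s₂,…,s_r)`, with `S_{<d}(∅) = 1`.
`zagTuple Fq m` is the tuple `(q-1, q(q-1), …, (q-1)q^{m-1})` (empty for `m = 0`).
-/

open Polynomial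
open scoped Classical

/-- `Slt Fq (s₁,…,s_r) d = S_{<d}(s₁,…,s_r)`, with `S_{<d}(∅) = 1`. -/
noncomputable def Slt (Fq : Type) [Field Fq] [Fintype Fq] : List ℕ → ℕ → RatFunc Fq
  | [], _ => 1
  | n :: rest, d => ∑ i ∈ Finset.range d, powerSum Fq i n * Slt Fq rest i

/-- The tuple `(q-1, q(q-1), …, (q-1)q^{m-1})` of length `m`. -/
def zagTuple (Fq : Type) [Field Fq] [Fintype Fq] (m : ℕ) : List ℕ :=
  (List.range m).map fun i => (Fintype.card Fq - 1) * Fintype.card Fq ^ i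

/-- The `n`-th Carlitz–Hayes polynomial
`E_n(z) = z · Π_{a ∈ A, a ≠ 0, deg a < n} (1 - z/a) ∈ K[z]`,
with the nonzero `a` of degree `< n` enumerated by nonzero `c : Fin n → Fq`
(`E_0(z) = z`). -/
noncomputable def carlitzHayes (Fq : Type) [Field Fq] [Fintype Fq] (n : ℕ) :
    Polynomial (RatFunc Fq) :=
  Polynomial.X * ∏ c : Fin n → Fq,
    if c = 0 then 1
    else 1 - Polynomial.C ((algebraMap (Polynomial Fq) (RatFunc Fq)
        (∑ i : Fin n, Polynomial.C (c i) * Polynomial.X ^ (i : ℕ)))⁻¹) * Polynomial.X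

/-!
Write `E_n(z) = z ∏ (1 - z/a)` over the nonzero `a ∈ A` of degree `< n`. Splitting off the
coefficient `λ` of `θ^n` gives
`E_{n+1} = E_n ∏_{λ ≠ 0} ∏_{deg a < n} (1 - z/(a + λθ^n))`.
If `E_n` is `Fq`-linear, each inner product is `1 - E_n(z)/(λ E_n(θ^n))`, so
`E_{n+1} = E_n (1 - (E_n/E_n(θ^n))^{q-1})`. Writing instead `a + λθ^n = λ b` with `b` monic of
degree `n` gives `E_{n+1} = E_n ∏_b (1 - (z/b)^{q-1})`; comparing the coefficients of `z^{q-1}`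
after cancelling `E_n` identifies `E_n(θ^n)^{1-q}` with `S_n(q-1)`. Hence
`E_{n+1} = E_n - S_n(q-1) E_n^q`, which is again `Fq`-linear, and its coefficients obey
`κ_{n+1,m+1} = κ_{n,m+1} - S_n(q-1) κ_{n,m}^q`, the recursion satisfied by the signed iterated
power sums `(-1)^m S_{<n}(q-1, …, (q-1)q^{m-1})`.
-/

namespace FiniteField

variable (Fq : Type*) [Field Fq] [Fintype Fq]

local notation "q" => Fintype.card Fq

theorem prod_univ_X_sub_C : ∏ a : Fq, (X - C a) = X ^ q - X := by
  have hq : 1 < q := Fintype.one_lt_card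
  have hmonic : (X ^ q - X : Fq[X]).Monic :=
    monic_X_pow_sub (by rw [degree_X]; exact_mod_cast hq)
  have h := prod_multiset_X_sub_C_of_monic_of_roots_card_eq hmonic
    (by rw [roots_X_pow_card_sub_X, X_pow_card_sub_X_natDegree_eq Fq hq]; rfl)
  rwa [roots_X_pow_card_sub_X] at h

theorem prod_erase_zero_X_sub_C :
    ∏ a ∈ Finset.univ.erase (0 : Fq), (X - C a) = X ^ (q - 1) - 1 := by
  have h := Finset.mul_prod_erase Finset.univ (fun a : Fq => X - C a) (Finset.mem_univ 0)
  rw [prod_univ_X_sub_C, map_zero, sub_zero] at h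
  refine mul_left_cancel₀ X_ne_zero (h.trans ?_)
  rw [mul_sub, ← pow_succ', Nat.sub_add_cancel Fintype.card_pos, mul_one]

variable {R : Type*} [CommRing R] [Algebra Fq R]

theorem prod_erase_zero_one_sub_inv_mul (t : R) :
    ∏ a ∈ Finset.univ.erase 0, (1 - algebraMap Fq R a⁻¹ * t) = 1 - t ^ (q - 1) := by
  have hfactor : ∀ a ∈ Finset.univ.erase (0 : Fq),
      1 - algebraMap Fq R a⁻¹ * t = algebraMap Fq R (-a)⁻¹ * (t - algebraMap Fq R a) := by
    intro a ha
    rw [inv_neg, map_neg, neg_mul, mul_sub, ← map_mul,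
      inv_mul_cancel₀ (Finset.ne_of_mem_erase ha), map_one]
    ring
  have hneg : ∏ a ∈ Finset.univ.erase (0 : Fq), -a = -1 := by
    simpa [eval_prod, zero_pow (Nat.sub_ne_zero_of_lt Fintype.one_lt_card)] using
      congrArg (eval 0) (prod_erase_zero_X_sub_C Fq)
  have hroots :
      ∏ a ∈ Finset.univ.erase (0 : Fq), (t - algebraMap Fq R a) = t ^ (q - 1) - 1 := by
    simpa [map_prod] using congrArg (aeval t) (prod_erase_zero_X_sub_C Fq)
  rw [Finset.prod_congr rfl hfactor, Finset.prod_mul_distrib, ← map_prod, Finset.prod_inv_distrib,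
    hneg, hroots, inv_neg, inv_one, map_neg, map_one]
  ring

variable {Fq}

theorem sum_pow_card {ι : Type*} (s : Finset ι) (f : ι → R) :
    (∑ i ∈ s, f i) ^ q = ∑ i ∈ s, f i ^ q :=
  map_sum (frobeniusAlgHom Fq R) f s

theorem neg_pow_card (x : R) : (-x) ^ q = -x ^ q :=
  map_neg (frobeniusAlgHom Fq R) x

theorem add_pow_card_pow (x y : R) (m : ℕ) : (x + y) ^ q ^ m = x ^ q ^ m + y ^ q ^ m := by
  induction m with
  | zero => simp
  | succ m ih =>
    rw [pow_succ, pow_mul, pow_mul, pow_mul, ih]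
    exact map_add (frobeniusAlgHom Fq R) _ _

end FiniteField

theorem Polynomial.prod_one_sub_C_inv_sub_mul_X {L ι : Type*} [Field L] (s : Finset ι)
    (r : ι → L) {y : L} (hy : ∀ i ∈ s, r i ≠ y) :
    ∏ i ∈ s, (1 - C (r i - y)⁻¹ * X) =
      C ((∏ i ∈ s, (X - C (r i))).eval y)⁻¹ *
        (∏ i ∈ s, (X - C (r i))).comp (X + C y) := by
  rw [eval_prod, prod_comp, ← Finset.prod_inv_distrib, map_prod, ← Finset.prod_mul_distrib]
  refine Finset.prod_congr rfl fun i hi => ?_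
  have hne : y - r i ≠ 0 := sub_ne_zero.mpr (hy i hi).symm
  rw [eval_sub, eval_X, eval_C, sub_comp, X_comp, C_comp, add_sub_assoc, ← C_sub, mul_add,
    ← C_mul, inv_mul_cancel₀ hne, C_1, ← neg_sub y, inv_neg, C_neg]
  ring

theorem Polynomial.coeff_prod_one_sub_C_mul_X_pow {R ι : Type*} [CommRing R] (s : Finset ι)
    (f : ι → R) {k : ℕ} (hk : k ≠ 0) :
    (∏ i ∈ s, (1 - C (f i) * X ^ k)).coeff k = -∑ i ∈ s, f i := by
  induction s using Finset.cons_induction with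
  | empty => simp [coeff_one, hk]
  | cons a s ha ih =>
    have h0 : (∏ i ∈ s, (1 - C (f i) * X ^ k)).coeff 0 = 1 := by
      simp [coeff_zero_eq_eval_zero, eval_prod, hk]
    rw [Finset.prod_cons, Finset.sum_cons, sub_mul, one_mul, coeff_sub, mul_assoc, coeff_C_mul,
      mul_comm (X ^ k), coeff_mul_X_pow', if_pos le_rfl, Nat.sub_self, h0, ih]
    ring

section LinearizedPoly

variable (Fq : Type*) [Fintype Fq] {L : Type*} [CommRing L]

local notation "q" => Fintype.card Fq

noncomputable def linearizedPoly (k : ℕ → L) (N : ℕ) : L[X] :=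
  ∑ m ∈ Finset.range N, C (k m) * X ^ q ^ m

variable {Fq} (k : ℕ → L) (N : ℕ)

theorem linearizedPoly_succ_of_eq_zero (h : k N = 0) :
    linearizedPoly Fq k (N + 1) = linearizedPoly Fq k N := by
  rw [linearizedPoly, Finset.sum_range_succ, h, C_0, zero_mul, add_zero, linearizedPoly]

variable [Field Fq] [Algebra Fq L]

theorem linearizedPoly_comp_X_add_C (y : L) :
    (linearizedPoly Fq k N).comp (X + C y) =
      linearizedPoly Fq k N + C ((linearizedPoly Fq k N).eval y) := by
  simp only [linearizedPoly, sum_comp, mul_comp, C_comp, pow_comp, X_comp,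
    FiniteField.add_pow_card_pow, ← C_pow, mul_add, Finset.sum_add_distrib, eval_finsetSum,
    eval_mul, eval_C, eval_pow, eval_X, map_sum, C_mul]

theorem eval_linearizedPoly_algebraMap_mul (a : Fq) (x : L) :
    (linearizedPoly Fq k N).eval (algebraMap Fq L a * x) =
      algebraMap Fq L a * (linearizedPoly Fq k N).eval x := by
  simp only [linearizedPoly, eval_finsetSum, eval_mul, eval_C, eval_pow, eval_X, mul_pow,
    ← map_pow, FiniteField.pow_card_pow, Finset.mul_sum]
  exact Finset.sum_congr rfl fun m _ => by ring

theorem linearizedPoly_pow_card :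
    linearizedPoly Fq k N ^ q = ∑ m ∈ Finset.range N, C (k m ^ q) * X ^ q ^ (m + 1) := by
  rw [linearizedPoly, FiniteField.sum_pow_card]
  exact Finset.sum_congr rfl fun m _ => by rw [mul_pow, ← C_pow, ← pow_mul, ← pow_succ]

theorem linearizedPoly_succ_eq_sub_mul_pow_card {k' : ℕ → L} {s : L} (h₀ : k' 0 = k 0)
    (hsucc : ∀ m, k' (m + 1) = k (m + 1) - s * k m ^ q) :
    linearizedPoly Fq k' (N + 1) =
      linearizedPoly Fq k (N + 1) - C s * linearizedPoly Fq k N ^ q := by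
  rw [linearizedPoly_pow_card, linearizedPoly, linearizedPoly, Finset.sum_range_succ',
    Finset.sum_range_succ' _ N, Finset.mul_sum]
  simp only [h₀, hsucc, map_sub, map_mul, sub_mul, mul_assoc, Finset.sum_sub_distrib]
  abel

end LinearizedPoly

section OfDegreeLT

variable (Fq : Type) [Field Fq]

noncomputable def ofDegreeLT (n : ℕ) : (Fin n → Fq) →ₗ[Fq] RatFunc Fq :=
  (Algebra.linearMap Fq[X] (RatFunc Fq)).restrictScalars Fq ∘ₗ (degreeLT Fq n).subtype ∘ₗ
    (degreeLTEquiv Fq n).symm.toLinearMap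

variable {Fq} {n : ℕ}

theorem ofDegreeLT_apply (c : Fin n → Fq) :
    ofDegreeLT Fq n c = algebraMap Fq[X] (RatFunc Fq) (∑ i : Fin n, C (c i) * X ^ (i : ℕ)) := by
  simp [ofDegreeLT, degreeLTEquiv, C_mul_X_pow_eq_monomial]

theorem ofDegreeLT_injective : Function.Injective (ofDegreeLT Fq n) :=
  (RatFunc.algebraMap_injective Fq).comp <|
    Subtype.val_injective.comp (degreeLTEquiv Fq n).symm.injective

theorem ofDegreeLT_snoc (c : Fin n → Fq) (a : Fq) :
    ofDegreeLT Fq (n + 1) (Fin.snoc c a) =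
      ofDegreeLT Fq n c + algebraMap Fq (RatFunc Fq) a * RatFunc.X ^ n := by
  simp [ofDegreeLT_apply, Fin.sum_univ_castSucc]

theorem algebraMap_monicOf (c : Fin n → Fq) :
    algebraMap Fq[X] (RatFunc Fq) (monicOf Fq n c) = RatFunc.X ^ n + ofDegreeLT Fq n c := by
  simp [monicOf, ofDegreeLT_apply]

theorem ofDegreeLT_ne_zero {c : Fin n → Fq} (hc : c ≠ 0) : ofDegreeLT Fq n c ≠ 0 :=
  (ofDegreeLT_injective.ne_iff' (map_zero _)).mpr hc

end OfDegreeLT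

section CarlitzHayes

variable {Fq : Type} [Field Fq] [Fintype Fq]

local notation "q" => Fintype.card Fq

-- The factor at `c = 0` is `1` on both sides, since `0⁻¹ = 0`.
theorem carlitzHayes_eq_X_mul_prod (n : ℕ) :
    carlitzHayes Fq n = X * ∏ c, (1 - C (ofDegreeLT Fq n c)⁻¹ * X) := by
  refine congrArg (X * ·) (Finset.prod_congr rfl fun c _ => ?_)
  rw [← ofDegreeLT_apply]
  split_ifs with hc
  · simp [hc]
  · rfl

theorem carlitzHayes_succ (n : ℕ) :
    carlitzHayes Fq (n + 1) = carlitzHayes Fq n *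
      ∏ a ∈ Finset.univ.erase 0, ∏ c, (1 - C (ofDegreeLT Fq n c +
        algebraMap Fq (RatFunc Fq) a * RatFunc.X ^ n)⁻¹ * X) := by
  have hsplit : ∏ c, (1 - C (ofDegreeLT Fq (n + 1) c)⁻¹ * X) = ∏ a : Fq, ∏ c,
      (1 - C (ofDegreeLT Fq n c + algebraMap Fq (RatFunc Fq) a * RatFunc.X ^ n)⁻¹ * X) := by
    refine (Fintype.prod_equiv (Fin.snocEquiv fun _ => Fq) (fun p => 1 - C (ofDegreeLT Fq n p.2 +
      algebraMap Fq (RatFunc Fq) p.1 * RatFunc.X ^ n)⁻¹ * X) _ fun p => ?_).symm.trans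
      (Fintype.prod_prod_type _)
    rw [show Fin.snocEquiv (fun _ => Fq) p = Fin.snoc p.2 p.1 from rfl, ofDegreeLT_snoc]
  rw [carlitzHayes_eq_X_mul_prod, carlitzHayes_eq_X_mul_prod, hsplit,
    ← Finset.mul_prod_erase _ _ (Finset.mem_univ 0)]
  simp only [map_zero, zero_mul, add_zero, mul_assoc]

theorem prod_erase_zero_prod_eq_prod_monicOf (n : ℕ) :
    ∏ a ∈ Finset.univ.erase 0, ∏ c, (1 - C (ofDegreeLT Fq n c +
        algebraMap Fq (RatFunc Fq) a * RatFunc.X ^ n)⁻¹ * X) =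
      ∏ c, (1 - C ((algebraMap Fq[X] (RatFunc Fq) (monicOf Fq n c))⁻¹ ^ (q - 1)) *
        X ^ (q - 1)) := by
  have hscale : ∀ a ∈ Finset.univ.erase (0 : Fq), ∏ c, (1 - C (ofDegreeLT Fq n c +
      algebraMap Fq (RatFunc Fq) a * RatFunc.X ^ n)⁻¹ * X) = ∏ c, (1 - algebraMap Fq _ a⁻¹ *
        (C (algebraMap Fq[X] (RatFunc Fq) (monicOf Fq n c))⁻¹ * X)) := by
    intro a ha
    have ha' : algebraMap Fq (RatFunc Fq) a ≠ 0 :=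
      (_root_.map_ne_zero _).mpr (Finset.ne_of_mem_erase ha)
    refine Fintype.prod_equiv (LinearEquiv.smulOfNeZero Fq _ a⁻¹
      (inv_ne_zero (Finset.ne_of_mem_erase ha))).toEquiv _ _ fun c => ?_
    rw [LinearEquiv.coe_toEquiv, LinearEquiv.smulOfNeZero_apply, algebraMap_monicOf, map_smul,
      Algebra.smul_def, Polynomial.algebraMap_apply, ← mul_assoc, ← C_mul,
      map_inv₀ (algebraMap Fq (RatFunc Fq)), ← mul_inv, mul_add, mul_inv_cancel_left₀ ha',
      add_comm]
  rw [Finset.prod_congr rfl hscale, Finset.prod_comm]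
  refine Finset.prod_congr rfl fun c _ => ?_
  rw [FiniteField.prod_erase_zero_one_sub_inv_mul, mul_pow, ← C_pow]

theorem prod_X_sub_C_ofDegreeLT (n : ℕ) :
    ∏ c, (X - C (ofDegreeLT Fq n c)) =
      C (∏ c ∈ Finset.univ.erase 0, -ofDegreeLT Fq n c) * carlitzHayes Fq n := by
  rw [carlitzHayes_eq_X_mul_prod, ← Finset.mul_prod_erase _ _ (Finset.mem_univ 0),
    ← Finset.mul_prod_erase _ (fun c => 1 - C (ofDegreeLT Fq n c)⁻¹ * X) (Finset.mem_univ 0),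
    map_zero, C_0, sub_zero, inv_zero, C_0, zero_mul, sub_zero, one_mul, map_prod, mul_left_comm,
    ← Finset.prod_mul_distrib]
  refine congrArg (X * ·) (Finset.prod_congr rfl fun c hc => ?_)
  have hne := ofDegreeLT_ne_zero (Finset.ne_of_mem_erase hc)
  rw [mul_sub, mul_one, ← mul_assoc, ← C_mul, neg_mul, mul_inv_cancel₀ hne]
  simp only [map_neg, C_1]
  ring

theorem prod_one_sub_C_inv_ofDegreeLT_add_mul_X {n N : ℕ} {k : ℕ → RatFunc Fq}
    (h : carlitzHayes Fq n = linearizedPoly Fq k N) {u : RatFunc Fq}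
    (hu : ∀ c, ofDegreeLT Fq n c + u ≠ 0) :
    ∏ c, (1 - C (ofDegreeLT Fq n c + u)⁻¹ * X) =
      1 - C ((carlitzHayes Fq n).eval u)⁻¹ * carlitzHayes Fq n := by
  have hy : ∀ c ∈ Finset.univ, ofDegreeLT Fq n c ≠ -u := fun c _ => by
    rw [ne_eq, ← add_eq_zero_iff_eq_neg]
    exact hu c
  have hne : (∏ c, (X - C (ofDegreeLT Fq n c))).eval (-u) ≠ 0 := by
    rw [eval_prod]
    exact Finset.prod_ne_zero_iff.mpr fun c hc => by simpa [sub_eq_zero] using (hy c hc).symm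
  have hodd : (carlitzHayes Fq n).eval (-u) = -(carlitzHayes Fq n).eval u := by
    rw [show -u = algebraMap Fq (RatFunc Fq) (-1) * u by simp, h,
      eval_linearizedPoly_algebraMap_mul]
    simp
  rw [prod_X_sub_C_ofDegreeLT, eval_C_mul, hodd] at hne
  obtain ⟨hD, he⟩ := mul_ne_zero_iff.mp hne
  have hprod := prod_one_sub_C_inv_sub_mul_X Finset.univ (ofDegreeLT Fq n) hy
  simp only [sub_neg_eq_add] at hprod
  rw [hprod, prod_X_sub_C_ofDegreeLT, eval_C_mul, C_mul_comp, h, linearizedPoly_comp_X_add_C, ← h,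
    hodd]
  set D := ∏ c ∈ Finset.univ.erase 0, -ofDegreeLT Fq n c
  set e := (carlitzHayes Fq n).eval u
  calc C (D * -e)⁻¹ * (C D * (carlitzHayes Fq n + C (-e)))
      = C ((D * -e)⁻¹ * D) * carlitzHayes Fq n + C ((D * -e)⁻¹ * (D * -e)) := by
        simp only [C_mul]
        ring
    _ = 1 - C e⁻¹ * carlitzHayes Fq n := by
        rw [inv_mul_cancel₀ hne, mul_inv_rev, mul_assoc, inv_mul_cancel₀ hD, mul_one, inv_neg,
          C_neg, C_1]
        ring

theorem carlitzHayes_succ_of_eq_linearizedPoly {n N : ℕ} {k : ℕ → RatFunc Fq}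
    (h : carlitzHayes Fq n = linearizedPoly Fq k N) :
    carlitzHayes Fq (n + 1) = carlitzHayes Fq n *
      (1 - (C ((carlitzHayes Fq n).eval (RatFunc.X ^ n))⁻¹ * carlitzHayes Fq n) ^ (q - 1)) := by
  rw [carlitzHayes_succ, ← FiniteField.prod_erase_zero_one_sub_inv_mul]
  refine congrArg _ (Finset.prod_congr rfl fun a ha => ?_)
  have hu : ∀ c, ofDegreeLT Fq n c + algebraMap Fq _ a * RatFunc.X ^ n ≠ 0 := fun c => by
    rw [← ofDegreeLT_snoc]
    exact ofDegreeLT_ne_zero fun h0 =>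
      Finset.ne_of_mem_erase ha (by simpa using congrFun h0 (Fin.last n))
  rw [prod_one_sub_C_inv_ofDegreeLT_add_mul_X h hu, h, eval_linearizedPoly_algebraMap_mul, ← h,
    mul_inv, C_mul, ← map_inv₀, Polynomial.algebraMap_apply, mul_assoc]

theorem coeff_carlitzHayes_pow_self (n k : ℕ) : (carlitzHayes Fq n ^ k).coeff k = 1 := by
  rw [carlitzHayes_eq_X_mul_prod, mul_pow, coeff_X_pow_mul', if_pos le_rfl, Nat.sub_self,
    coeff_zero_eq_eval_zero]
  simp [eval_prod]

theorem carlitzHayes_ne_zero (n : ℕ) : carlitzHayes Fq n ≠ 0 := fun h => by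
  simpa [h] using coeff_carlitzHayes_pow_self (Fq := Fq) n 1

theorem carlitzHayes_succ_eq_sub_powerSum_mul_pow {n N : ℕ} {k : ℕ → RatFunc Fq}
    (h : carlitzHayes Fq n = linearizedPoly Fq k N) :
    carlitzHayes Fq (n + 1) =
      carlitzHayes Fq n - C (powerSum Fq n (q - 1)) * carlitzHayes Fq n ^ q := by
  set ε := ((carlitzHayes Fq n).eval (RatFunc.X ^ n))⁻¹
  have hfactor : 1 - (C ε * carlitzHayes Fq n) ^ (q - 1) = ∏ c, (1 -
      C ((algebraMap Fq[X] (RatFunc Fq) (monicOf Fq n c))⁻¹ ^ (q - 1)) * X ^ (q - 1)) := by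
    refine mul_left_cancel₀ (carlitzHayes_ne_zero n)
      ((carlitzHayes_succ_of_eq_linearizedPoly h).symm.trans ?_)
    rw [carlitzHayes_succ, prod_erase_zero_prod_eq_prod_monicOf]
  have hq : q - 1 ≠ 0 := Nat.sub_ne_zero_of_lt Fintype.one_lt_card
  have hε : ε ^ (q - 1) = powerSum Fq n (q - 1) := by
    have := congrArg (coeff · (q - 1)) hfactor
    simp only [coeff_sub, coeff_one, if_neg hq, mul_pow, ← C_pow, coeff_C_mul,
      coeff_carlitzHayes_pow_self n (q - 1), coeff_prod_one_sub_C_mul_X_pow _ _ hq] at this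
    rw [powerSum]
    linear_combination -this
  calc carlitzHayes Fq (n + 1) = carlitzHayes Fq n - C (ε ^ (q - 1)) *
      (carlitzHayes Fq n ^ (q - 1) * carlitzHayes Fq n) := by
        rw [carlitzHayes_succ_of_eq_linearizedPoly h, mul_pow, ← C_pow]
        ring
    _ = carlitzHayes Fq n - C (powerSum Fq n (q - 1)) * carlitzHayes Fq n ^ q := by
        rw [hε, ← pow_succ, Nat.sub_add_cancel Fintype.card_pos]

end CarlitzHayes

section PowerSums

variable {Fq : Type} [Field Fq] [Fintype Fq]

local notation "q" => Fintype.card Fq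

theorem Slt_eq_zero_of_lt_length {l : List ℕ} {d : ℕ} (hd : d < l.length) : Slt Fq l d = 0 := by
  induction l generalizing d with
  | nil => simp at hd
  | cons s l ih =>
    refine Finset.sum_eq_zero fun i hi => ?_
    rw [ih (by simp only [List.length_cons, Finset.mem_range] at hd hi; omega), mul_zero]

theorem powerSum_card_mul (d s : ℕ) : powerSum Fq d (q * s) = powerSum Fq d s ^ q := by
  simp only [powerSum, FiniteField.sum_pow_card, ← pow_mul, mul_comm]

theorem Slt_map_card_mul (l : List ℕ) (d : ℕ) : Slt Fq (l.map (q * ·)) d = Slt Fq l d ^ q := by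
  induction l generalizing d with
  | nil => simp [Slt]
  | cons s l ih => simp only [List.map_cons, Slt, FiniteField.sum_pow_card, mul_pow,
      powerSum_card_mul, ih]

variable (Fq) in
theorem zagTuple_succ (m : ℕ) :
    zagTuple Fq (m + 1) = (q - 1) :: (zagTuple Fq m).map (q * ·) := by
  simp only [zagTuple, List.range_succ_eq_map, List.map_cons, List.map_map]
  congr 1
  · simp
  · exact List.map_congr_left fun i _ => by simp only [Function.comp_apply, pow_succ]; ring

variable (Fq) in
/-- The paper's `κ_{n,m}`. -/
noncomputable def carlitzHayesCoeff (n m : ℕ) : RatFunc Fq :=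
  (-1) ^ m * Slt Fq (zagTuple Fq m) n

theorem carlitzHayesCoeff_of_lt {n m : ℕ} (h : n < m) : carlitzHayesCoeff Fq n m = 0 := by
  rw [carlitzHayesCoeff, Slt_eq_zero_of_lt_length (by simpa [zagTuple] using h), mul_zero]

theorem carlitzHayesCoeff_succ_succ (n m : ℕ) :
    carlitzHayesCoeff Fq (n + 1) (m + 1) =
      carlitzHayesCoeff Fq n (m + 1) - powerSum Fq n (q - 1) * carlitzHayesCoeff Fq n m ^ q := by
  have hsign : ((-1 : RatFunc Fq) ^ m) ^ q = (-1) ^ m := by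
    rw [← pow_mul, mul_comm, pow_mul, FiniteField.neg_pow_card, one_pow]
  simp only [carlitzHayesCoeff, zagTuple_succ, Slt, Finset.sum_range_succ _ n, Slt_map_card_mul,
    mul_pow, hsign]
  ring

theorem linearizedPoly_carlitzHayesCoeff_succ (n : ℕ) :
    linearizedPoly Fq (carlitzHayesCoeff Fq (n + 1)) (n + 1 + 1) =
      linearizedPoly Fq (carlitzHayesCoeff Fq n) (n + 1) - C (powerSum Fq n (q - 1)) *
        linearizedPoly Fq (carlitzHayesCoeff Fq n) (n + 1) ^ q := by
  rw [linearizedPoly_succ_eq_sub_mul_pow_card (carlitzHayesCoeff Fq n) (n + 1)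
      (k' := carlitzHayesCoeff Fq (n + 1)) rfl (carlitzHayesCoeff_succ_succ n),
    linearizedPoly_succ_of_eq_zero _ (n + 1) (carlitzHayesCoeff_of_lt (Nat.lt_add_one n))]

end PowerSums

/-- for every `n ≥ 0`,
`E_n(z) = Σ_{m=0}^{n} (-1)^m · S_{<n}(q-1, q(q-1), …, (q-1)q^{m-1}) · z^{q^m}`
in `K[z]` (the `m = 0` summand being `z`); in particular `E_n` is `Fq`-linear
and all its other coefficients vanish. -/
theorem statement7 (Fq : Type) [Field Fq] [Fintype Fq] (n : ℕ) :
    carlitzHayes Fq n =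
      ∑ m ∈ Finset.range (n + 1),
        Polynomial.C ((-1 : RatFunc Fq) ^ m * Slt Fq (zagTuple Fq m) n) *
          Polynomial.X ^ Fintype.card Fq ^ m := by
  change carlitzHayes Fq n = linearizedPoly Fq (carlitzHayesCoeff Fq n) (n + 1)
  induction n with
  | zero => simp [carlitzHayes_eq_X_mul_prod, linearizedPoly, carlitzHayesCoeff, zagTuple, Slt,
      ofDegreeLT_apply]
  | succ n ih =>
    rw [carlitzHayes_succ_eq_sub_powerSum_mul_pow ih, ih, ← linearizedPoly_carlitzHayesCoeff_succ]
end

section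
/- Let i ≥ 1 and r ≥ 0 be integers with 1 + (r+1)(q−1) < i·(q−1). Then Σ_{a∈A_{+,i}} a(t) · a^{q^{r+1}−1} = 0 in the polynomial ring F_q[θ][t]. (This is the vanishing statement established in the proof of the paper's Lemma 1.1 that the series Z_k define entire functions, specialized to genus zero, where dim_{F_q} A(<i) = i.) -/
/-!
Genus-zero setting: `Fq` the finite field with `q = Fintype.card Fq` elements,
`A = Fq[θ] = Polynomial Fq`.  `t` is a second indeterminate: the polynomial ring
`Fq[θ][t]` is `Polynomial (Polynomial Fq)` (outer variable `t`), and for `a ∈ A`,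
`a(t)` is `a` with `θ` replaced by `t`, i.e. `a.map Polynomial.C` regarded in
`Fq[θ][t]` (a polynomial in `t` with constant coefficients), while `a` itself
embeds as the constant `Polynomial.C a`.
-/

open Polynomial

/-
Writing `a = θ^i + Σ_j c_j θ^j`, every Frobenius twist `a^(q^s)` is affine in the
coefficients `c ∈ F_q^i`, because `x ↦ x^q` is `F_q`-linear. Since
`q^(r+1) - 1 = Σ_{s ≤ r} (q - 1) q^s`, the summand `a(t) · a^(q^(r+1) - 1)` is therefore a
polynomial function of `c`, with coefficients in `F_q[θ][t]`, of total degree at most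
`1 + (r+1)(q-1) < i(q-1)`. Summing such a function over all of `F_q^i` gives `0`, monomial by
monomial, because `Σ_{x ∈ F_q} x^k = 0` for `k < q - 1`.
-/

open Finset

section PolynomialFunctions

variable (K : Type*) {R S σ : Type*} [CommSemiring K] [CommSemiring R] [Algebra K R]
  [CommSemiring S] [Algebra K S]

def IsPolyFunOfDegreeLE (D : ℕ) (f : (σ → K) → R) : Prop :=
  ∃ P : MvPolynomial σ R, P.totalDegree ≤ D ∧
    f = fun x => MvPolynomial.eval (algebraMap K R ∘ x) P

variable {K}

theorem isPolyFunOfDegreeLE_affine [Fintype σ] (b : R) (v : σ → R) :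
    IsPolyFunOfDegreeLE K 1 fun x : σ → K => b + ∑ j, x j • v j := by
  refine ⟨MvPolynomial.C b + ∑ j, MvPolynomial.monomial (Finsupp.single j 1) (v j), ?_, ?_⟩
  · refine (MvPolynomial.totalDegree_add _ _).trans (max_le (by simp) ?_)
    refine MvPolynomial.totalDegree_finsetSum_le fun j _ => ?_
    exact (MvPolynomial.totalDegree_monomial_le _ _).trans (by simp)
  · ext x
    simp [MvPolynomial.eval_monomial, Algebra.smul_def, mul_comm]

namespace IsPolyFunOfDegreeLE

variable {D E : ℕ} {f g : (σ → K) → R}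

theorem mul (hf : IsPolyFunOfDegreeLE K D f) (hg : IsPolyFunOfDegreeLE K E g) :
    IsPolyFunOfDegreeLE K (D + E) (f * g) := by
  obtain ⟨P, hP, rfl⟩ := hf
  obtain ⟨Q, hQ, rfl⟩ := hg
  exact ⟨P * Q, (MvPolynomial.totalDegree_mul P Q).trans (add_le_add hP hQ), by ext; simp⟩

theorem pow (hf : IsPolyFunOfDegreeLE K D f) (m : ℕ) :
    IsPolyFunOfDegreeLE K (m * D) (f ^ m) := by
  obtain ⟨P, hP, rfl⟩ := hf
  exact ⟨P ^ m, (MvPolynomial.totalDegree_pow P m).trans (Nat.mul_le_mul_left m hP),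
    by ext; simp⟩

theorem prod {ι : Type*} (s : Finset ι) {f : ι → (σ → K) → R}
    (hf : ∀ k ∈ s, IsPolyFunOfDegreeLE K D (f k)) :
    IsPolyFunOfDegreeLE K (#s * D) (∏ k ∈ s, f k) := by
  classical
  induction s using Finset.induction_on with
  | empty => exact ⟨1, by simp, by ext; simp⟩
  | insert k s hk ih =>
    rw [prod_insert hk, card_insert_of_notMem hk, add_one_mul, add_comm]
    exact (hf k (mem_insert_self k s)).mul (ih fun k hk => hf k (mem_insert_of_mem hk))

theorem map (hf : IsPolyFunOfDegreeLE K D f) (φ : R →ₐ[K] S) :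
    IsPolyFunOfDegreeLE K D (φ ∘ f) := by
  obtain ⟨P, hP, rfl⟩ := hf
  refine ⟨MvPolynomial.map φ.toRingHom P,
    (Finset.sup_mono (MvPolynomial.support_map_subset _ _)).trans hP, ?_⟩
  ext x
  rw [Function.comp_apply, MvPolynomial.eval_map, MvPolynomial.eval, MvPolynomial.coe_eval₂Hom,
    ← φ.coe_toRingHom, MvPolynomial.eval₂_comp_left]
  congr 1
  ext; simp

end IsPolyFunOfDegreeLE

end PolynomialFunctions

namespace IsPolyFunOfDegreeLE

variable {K R σ : Type*} [Field K] [Fintype K] [CommRing R] [Algebra K R] {D : ℕ}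
  {f : (σ → K) → R}

theorem sum_eq_zero [Fintype σ] [DecidableEq σ]
    (hf : IsPolyFunOfDegreeLE K D f) (hD : D < Fintype.card σ * (Fintype.card K - 1)) :
    ∑ x, f x = 0 := by
  obtain ⟨P, hP, rfl⟩ := hf
  simp_rw [MvPolynomial.eval_eq']
  rw [Finset.sum_comm]
  refine Finset.sum_eq_zero fun d hd => ?_
  have hmonomial : ∑ x : σ → K, ∏ j, x j ^ d j = 0 := by
    have hdeg := (MvPolynomial.totalDegree_monomial_le d (1 : K)).trans
      ((MvPolynomial.le_totalDegree hd).trans hP)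
    simpa [MvPolynomial.eval_monomial, Finsupp.prod_fintype] using
      MvPolynomial.sum_eval_eq_zero (MvPolynomial.monomial d (1 : K)) (by rw [mul_comm]; omega)
  calc ∑ x : σ → K, P.coeff d * ∏ j, (algebraMap K R ∘ x) j ^ d j
      = P.coeff d * algebraMap K R (∑ x : σ → K, ∏ j, x j ^ d j) := by
        simp [mul_sum, map_sum, map_prod, map_pow]
    _ = 0 := by rw [hmonomial, map_zero, mul_zero]

theorem pow_card_pow (hf : IsPolyFunOfDegreeLE K D f) (s : ℕ) :
    IsPolyFunOfDegreeLE K D (f ^ Fintype.card K ^ s) := by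
  convert hf.map (FiniteField.frobeniusAlgHom K R ^ s) using 1
  ext x
  simp [AlgHom.coe_pow, FiniteField.coe_frobeniusAlgHom, pow_iterate]

end IsPolyFunOfDegreeLE

theorem pow_pow_sub_one_eq_prod {M : Type*} [CommMonoid M] {q : ℕ} (hq : 1 ≤ q) (y : M)
    (n : ℕ) :
    y ^ (q ^ n - 1) = ∏ s ∈ range n, (y ^ q ^ s) ^ (q - 1) := by
  simp_rw [← pow_mul, prod_pow_eq_pow_sum, ← sum_mul, geom_sum_mul_of_one_le hq]

theorem monicOf_eq_add_sum_smul (Fq : Type) [Field Fq] (d : ℕ) (c : Fin d → Fq) :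
    monicOf Fq d c = X ^ d + ∑ j, c j • X ^ (j : ℕ) := by
  simp only [monicOf, C_mul']

theorem statement14_general (Fq : Type) [Field Fq] [Fintype Fq] (i r : ℕ)
    (h : 1 + (r + 1) * (Fintype.card Fq - 1) < i * (Fintype.card Fq - 1)) :
    ∑ c : Fin i → Fq,
      Polynomial.C (monicOf Fq i c ^ (Fintype.card Fq ^ (r + 1) - 1)) *
        (monicOf Fq i c).map (Polynomial.C : Fq →+* Polynomial Fq) = 0 := by
  have ha : IsPolyFunOfDegreeLE Fq 1 (monicOf Fq i) := by
    rw [funext (monicOf_eq_add_sum_smul Fq i)]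
    exact isPolyFunOfDegreeLE_affine _ _
  have hpow : IsPolyFunOfDegreeLE Fq ((r + 1) * (Fintype.card Fq - 1))
      (monicOf Fq i ^ (Fintype.card Fq ^ (r + 1) - 1)) := by
    rw [pow_pow_sub_one_eq_prod Fintype.card_pos]
    simpa only [card_range, mul_one] using
      IsPolyFunOfDegreeLE.prod (range (r + 1)) fun s _ => (ha.pow_card_pow s).pow _
  have hterm := (hpow.map (CAlgHom : Fq[X] →ₐ[Fq] Fq[X][X])).mul (ha.map (mapAlg Fq Fq[X]))
  simpa [mapAlg_eq_map] using hterm.sum_eq_zero (by simp only [Fintype.card_fin]; omega)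

/-- let `i ≥ 1` and `r ≥ 0` with `1 + (r+1)(q-1) < i(q-1)`.  Then
`Σ_{a ∈ A_{+,i}} a(t)·a^{q^{r+1} - 1} = 0` in `Fq[θ][t]`. -/
theorem statement14 (Fq : Type) [Field Fq] [Fintype Fq] (i r : ℕ) (hi : 1 ≤ i)
    (h : 1 + (r + 1) * (Fintype.card Fq - 1) < i * (Fintype.card Fq - 1)) :
    ∑ c : Fin i → Fq,
      Polynomial.C (monicOf Fq i c ^ (Fintype.card Fq ^ (r + 1) - 1)) *
        (monicOf Fq i c).map (Polynomial.C : Fq →+* Polynomial Fq) = 0 :=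
  statement14_general Fq i r h
end

section
/- Let B = F_2[x,y]/(y² + y + x³ + x + 1). For every integer n ≥ 1, writing X = x^{2^n} and Y = y^{2^n} in B, one has (X² + x²)(X⁴ + x + 1) = (Y² + y + xX² + x)(Y² + y + xX² + x + 1) in B. (This is the identity, after clearing denominators, proving case (i) of the Lara Rodríguez–Thakur conjecture: the conjectured formula α_{n,1} = (X²+x²)/(Y²+y+xX²+x) for the ratio ζ_A(q^n−1, q^{n+1}−q^n)/ζ_A(q^{n+1}−1) agrees with the shtuka-theoretic formula α_{n,1} = (Y²+y+xX²+x+1)/(X⁴+x+1).) -/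
/-!
Frobenius is a ring endomorphism in characteristic 2, so with `X = x^{2^n}`, `Y = y^{2^n}` the
point `(X², Y²) = (x^{2^{n+1}}, y^{2^{n+1}})` again lies on `y² + y = x³ + x + 1`. Writing
`u = Y² + y + xX² + x`, the right-hand side is `u² + u`; expanding it in characteristic 2 and
eliminating `Y⁴ + Y²` and `y² + y` with the two curve equations gives the left-hand side.
-/

open Polynomial

/-- The coordinate ring `B = F₂[x,y]/(y² + y + x³ + x + 1)`. -/
abbrev Bone : Type :=
  Polynomial (Polynomial (ZMod 2)) ⧸
    Ideal.span {(Polynomial.X ^ 2 + Polynomial.X +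
      Polynomial.C (Polynomial.X ^ 3 + Polynomial.X + 1) :
        Polynomial (Polynomial (ZMod 2)))}

/-- The image `x` of the inner variable in `B`. -/
noncomputable def xB : Bone :=
  Ideal.Quotient.mk _ (Polynomial.C Polynomial.X)

/-- The image `y` of the outer variable in `B`. -/
noncomputable def yB : Bone :=
  Ideal.Quotient.mk _ Polynomial.X

section Curve

variable {R S : Type*} [CommRing R] [CommRing S]

def OnCurve (x y : R) : Prop :=
  y ^ 2 + y = x ^ 3 + x + 1

theorem OnCurve.map {x y : R} (h : OnCurve x y) (f : R →+* S) : OnCurve (f x) (f y) := by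
  simpa only [OnCurve, map_add, map_pow, map_one] using congrArg f h

theorem OnCurve.pow_two_pow [CharP R 2] {x y : R} (h : OnCurve x y) (n : ℕ) :
    OnCurve (x ^ 2 ^ n) (y ^ 2 ^ n) :=
  h.map (iterateFrobenius R 2 n)

theorem OnCurve.alpha_formulas_agree [CharP R 2] {x y X Y : R} (hxy : OnCurve x y)
    (hXY : OnCurve (X ^ 2) (Y ^ 2)) :
    (X ^ 2 + x ^ 2) * (X ^ 4 + x + 1) =
      (Y ^ 2 + y + x * X ^ 2 + x) * (Y ^ 2 + y + x * X ^ 2 + x + 1) := by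
  unfold OnCurve at hxy hXY
  grind

end Curve

instance : Nontrivial Bone := by
  refine Ideal.Quotient.nontrivial_iff.mpr fun htop => ?_
  have hdeg : (X ^ 2 + X + C (X ^ 3 + X + 1) : (ZMod 2)[X][X]).natDegree = 2 := by
    compute_degree!
  have := natDegree_eq_zero_of_isUnit (Ideal.span_singleton_eq_top.mp htop)
  omega

instance : CharP Bone 2 :=
  charP_of_injective_algebraMap (algebraMap (ZMod 2) Bone).injective 2

theorem onCurve_xB_yB : OnCurve xB yB := by
  have hrel := Ideal.Quotient.eq_zero_iff_mem.mpr
    (Ideal.mem_span_singleton_self (X ^ 2 + X + C (X ^ 3 + X + 1) : (ZMod 2)[X][X]))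
  simp only [map_add, map_pow, map_one] at hrel
  rwa [OnCurve, ← sub_eq_zero, CharTwo.sub_eq_add]

theorem statement16_general (n : ℕ) :
    ∀ X Y : Bone, X = xB ^ 2 ^ n → Y = yB ^ 2 ^ n →
      (X ^ 2 + xB ^ 2) * (X ^ 4 + xB + 1) =
        (Y ^ 2 + yB + xB * X ^ 2 + xB) * (Y ^ 2 + yB + xB * X ^ 2 + xB + 1) := by
  rintro X Y rfl rfl
  refine onCurve_xB_yB.alpha_formulas_agree ?_
  simpa only [← pow_mul, ← pow_succ] using onCurve_xB_yB.pow_two_pow (n + 1)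

/-- for every `n ≥ 1`, with `X = x^{2^n}` and `Y = y^{2^n}` in `B`,
`(X² + x²)(X⁴ + x + 1) = (Y² + y + xX² + x)(Y² + y + xX² + x + 1)`. -/
theorem statement16 (n : ℕ) (hn : 1 ≤ n) :
    ∀ X Y : Bone, X = xB ^ 2 ^ n → Y = yB ^ 2 ^ n →
      (X ^ 2 + xB ^ 2) * (X ^ 4 + xB + 1) =
        (Y ^ 2 + yB + xB * X ^ 2 + xB) * (Y ^ 2 + yB + xB * X ^ 2 + xB + 1) :=
  statement16_general n
end
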